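/- arXiv:2602.16064 — 4 statements merged into one kernel-verified Lean document; each statement's English description precedes it below -/
import Mathlib

section
/- Let Z = (Z_k)_{k≥0} be a nested family of normed spaces over K in which every embedding Z_k ⊆ Z_{k+1} is compact (i.e., every bounded sequence in Z_k has a subsequence converging in the norm of Z_{k+1}). Then every sequence in Z_0 that converges in the norm of Z_0 has a subsequence that possesses a strict expansion in Z. -/
open Filter

section ExpansionDefs

variable (𝕜 : Type*) [RCLike 𝕜] {E : Type*} [AddCommGroup E] [Module 𝕜 E]

/-- The set `S ⊆ E`, equipped with the norm function `nrm`, is a normed space over `𝕜`. -/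
def IsNormedSubspace (S : Set E) (nrm : E → ℝ) : Prop :=
  (0 : E) ∈ S ∧ (∀ x ∈ S, ∀ y ∈ S, x + y ∈ S) ∧ (∀ c : 𝕜, ∀ x ∈ S, c • x ∈ S) ∧
    (∀ x ∈ S, 0 ≤ nrm x) ∧ (∀ x ∈ S, (nrm x = 0 ↔ x = 0)) ∧
    (∀ x ∈ S, ∀ y ∈ S, nrm (x + y) ≤ nrm x + nrm y) ∧
    ∀ c : 𝕜, ∀ x ∈ S, nrm (c • x) = ‖c‖ * nrm x

/-- `Z` together with the norms `nrm` is a nested family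
`Z₀ ⊆ Z₁ ⊆ ⋯` of normed spaces over `𝕜` with continuous embeddings. -/
def IsNestedFamily (Z : ℕ → Set E) (nrm : ℕ → E → ℝ) : Prop :=
  (∀ k, IsNormedSubspace 𝕜 (Z k) (nrm k)) ∧ (∀ k, Z k ⊆ Z (k + 1)) ∧
    ∀ k, ∃ C > 0, ∀ x ∈ Z k, nrm (k + 1) x ≤ C * nrm k x

/-- Every embedding `Z k ⊆ Z (k+1)` is compact: every bounded sequence in `Z k`
has a subsequence converging, in the norm of `Z (k+1)`, to an element of `Z (k+1)`. -/
def HasCompactEmbeddings {E : Type*} [AddCommGroup E] (Z : ℕ → Set E) (nrm : ℕ → E → ℝ) :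
    Prop :=
  ∀ (k : ℕ) (u : ℕ → E), (∀ n, u n ∈ Z k) → (∃ M, ∀ n, nrm k (u n) ≤ M) →
    ∃ ψ : ℕ → ℕ, StrictMono ψ ∧
      ∃ x ∈ Z (k + 1), Tendsto (fun n => nrm (k + 1) (u (ψ n) - x)) atTop (nhds 0)

/-- The partial sum `∑_{j=1}^m Γ_{j,n} w_j` (real coefficients acting through `𝕜`). -/
noncomputable def expPartialSum (w : ℕ → E) (Γ : ℕ → ℕ → ℝ) (m n : ℕ) : E :=
  ∑ j ∈ Finset.Icc 1 m, algebraMap ℝ 𝕜 (Γ j n) • w j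

/-- Case (I) of a strict expansion: the trivial expansion. -/
def StrictCaseI {E : Type*} [AddCommGroup E] (Z : ℕ → Set E) (v : ℕ → E) (c : E) : Prop :=
  c ∈ Z 0 ∧ ∀ n, v n = c

/-- Case (II) of a strict expansion: a finite expansion with `K0 ≥ 1` terms. -/
def StrictCaseII (Z : ℕ → Set E) (nrm : ℕ → E → ℝ) (v : ℕ → E) (c : E) (K0 : ℕ)
    (w : ℕ → E) (wn : ℕ → ℕ → E) (Γ : ℕ → ℕ → ℝ) : Prop :=
  1 ≤ K0 ∧ c ∈ Z 0 ∧
    (∀ k, 1 ≤ k → k ≤ K0 → w k ∈ Z k) ∧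
    (∀ k, 1 ≤ k → k ≤ K0 → ∀ n, wn k n ∈ Z (k - 1)) ∧
    (∀ k, 1 ≤ k → k ≤ K0 → ∀ n, 0 < Γ k n) ∧
    Tendsto (fun n => Γ 1 n) atTop (nhds 0) ∧
    (∀ k, 1 ≤ k → k < K0 → Tendsto (fun n => Γ (k + 1) n / Γ k n) atTop (nhds 0)) ∧
    (∀ k, 1 ≤ k → k ≤ K0 → Tendsto (fun n => nrm k (wn k n - w k)) atTop (nhds 0)) ∧
    (∀ k, 1 ≤ k → k ≤ K0 → ∀ n, nrm (k - 1) (wn k n) = 1) ∧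
    (∀ k, 1 ≤ k → k ≤ K0 → ∀ n,
      v n = c + expPartialSum 𝕜 w Γ (k - 1) n + algebraMap ℝ 𝕜 (Γ k n) • wn k n) ∧
    ∀ n, wn K0 n = w K0

/-- Case (III) of a strict expansion: an infinite expansion. -/
def StrictCaseIII (Z : ℕ → Set E) (nrm : ℕ → E → ℝ) (v : ℕ → E) (c : E)
    (w : ℕ → E) (wn : ℕ → ℕ → E) (Γ : ℕ → ℕ → ℝ) (Nk : ℕ → ℕ) : Prop :=
  c ∈ Z 0 ∧
    (∀ k, 1 ≤ k → w k ∈ Z k) ∧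
    (∀ k, 1 ≤ k → ∀ n, wn k n ∈ Z (k - 1)) ∧
    (∀ k, 1 ≤ k → ∀ n, 0 < Γ k n) ∧
    (∀ k, 1 ≤ k → 1 ≤ Nk k) ∧
    Tendsto (fun n => Γ 1 n) atTop (nhds 0) ∧
    (∀ k, 1 ≤ k → Tendsto (fun n => Γ (k + 1) n / Γ k n) atTop (nhds 0)) ∧
    (∀ k, 1 ≤ k → Tendsto (fun n => nrm k (wn k n - w k)) atTop (nhds 0)) ∧
    (∀ k, 1 ≤ k → ∀ n,
      v n = c + expPartialSum 𝕜 w Γ (k - 1) n + algebraMap ℝ 𝕜 (Γ k n) • wn k n) ∧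
    ∀ k, 1 ≤ k → ∀ n, Nk k ≤ n → nrm (k - 1) (wn k n) = 1

/-- The strict expansion `v_n ≈ c + ∑_{k ∈ N} Γ_{k,n} w_k` with explicit data:
the index set `N` is `∅` in case (I), `{1, …, K0}` in case (II) and `{k | k ≥ 1}`
in case (III). -/
def StrictExpansionWith (Z : ℕ → Set E) (nrm : ℕ → E → ℝ) (v : ℕ → E) (c : E) (N : Set ℕ)
    (w : ℕ → E) (wn : ℕ → ℕ → E) (Γ : ℕ → ℕ → ℝ) (Nk : ℕ → ℕ) : Prop :=
  (N = ∅ ∧ StrictCaseI Z v c) ∨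
    (∃ K0 : ℕ, N = Set.Icc 1 K0 ∧ StrictCaseII 𝕜 Z nrm v c K0 w wn Γ) ∨
    (N = {k : ℕ | 1 ≤ k} ∧ StrictCaseIII 𝕜 Z nrm v c w wn Γ Nk)

/-- `v` possesses a strict expansion in the nested family `(Z, nrm)`. -/
def HasStrictExpansion (Z : ℕ → Set E) (nrm : ℕ → E → ℝ) (v : ℕ → E) : Prop :=
  ∃ (c : E) (N : Set ℕ) (w : ℕ → E) (wn : ℕ → ℕ → E) (Γ : ℕ → ℕ → ℝ) (Nk : ℕ → ℕ),
    StrictExpansionWith 𝕜 Z nrm v c N w wn Γ Nk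

/-- Case (II) of a relaxed expansion: unit-norm conditions dropped, `w K0 ≠ 0` required. -/
def RelaxedCaseII (Z : ℕ → Set E) (nrm : ℕ → E → ℝ) (v : ℕ → E) (c : E) (K0 : ℕ)
    (w : ℕ → E) (wn : ℕ → ℕ → E) (Γ : ℕ → ℕ → ℝ) : Prop :=
  1 ≤ K0 ∧ c ∈ Z 0 ∧
    (∀ k, 1 ≤ k → k ≤ K0 → w k ∈ Z k) ∧
    (∀ k, 1 ≤ k → k ≤ K0 → ∀ n, wn k n ∈ Z (k - 1)) ∧
    (∀ k, 1 ≤ k → k ≤ K0 → ∀ n, 0 < Γ k n) ∧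
    Tendsto (fun n => Γ 1 n) atTop (nhds 0) ∧
    (∀ k, 1 ≤ k → k < K0 → Tendsto (fun n => Γ (k + 1) n / Γ k n) atTop (nhds 0)) ∧
    (∀ k, 1 ≤ k → k ≤ K0 → Tendsto (fun n => nrm k (wn k n - w k)) atTop (nhds 0)) ∧
    (∀ k, 1 ≤ k → k ≤ K0 → ∀ n,
      v n = c + expPartialSum 𝕜 w Γ (k - 1) n + algebraMap ℝ 𝕜 (Γ k n) • wn k n) ∧
    (∀ n, wn K0 n = w K0) ∧ w K0 ≠ 0

/-- Case (III) of a relaxed expansion: unit-norm conditions dropped. -/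
def RelaxedCaseIII (Z : ℕ → Set E) (nrm : ℕ → E → ℝ) (v : ℕ → E) (c : E)
    (w : ℕ → E) (wn : ℕ → ℕ → E) (Γ : ℕ → ℕ → ℝ) : Prop :=
  c ∈ Z 0 ∧
    (∀ k, 1 ≤ k → w k ∈ Z k) ∧
    (∀ k, 1 ≤ k → ∀ n, wn k n ∈ Z (k - 1)) ∧
    (∀ k, 1 ≤ k → ∀ n, 0 < Γ k n) ∧
    Tendsto (fun n => Γ 1 n) atTop (nhds 0) ∧
    (∀ k, 1 ≤ k → Tendsto (fun n => Γ (k + 1) n / Γ k n) atTop (nhds 0)) ∧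
    (∀ k, 1 ≤ k → Tendsto (fun n => nrm k (wn k n - w k)) atTop (nhds 0)) ∧
    ∀ k, 1 ≤ k → ∀ n,
      v n = c + expPartialSum 𝕜 w Γ (k - 1) n + algebraMap ℝ 𝕜 (Γ k n) • wn k n

/-- A relaxed expansion `v_n ≈ c + ∑_{k ∈ N} Γ_{k,n} w_k` with explicit data. -/
def RelaxedExpansionWith (Z : ℕ → Set E) (nrm : ℕ → E → ℝ) (v : ℕ → E) (c : E) (N : Set ℕ)
    (w : ℕ → E) (wn : ℕ → ℕ → E) (Γ : ℕ → ℕ → ℝ) : Prop :=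
  (N = ∅ ∧ StrictCaseI Z v c) ∨
    (∃ K0 : ℕ, N = Set.Icc 1 K0 ∧ RelaxedCaseII 𝕜 Z nrm v c K0 w wn Γ) ∨
    (N = {k : ℕ | 1 ≤ k} ∧ RelaxedCaseIII 𝕜 Z nrm v c w wn Γ)

/-- `v` has a unitary expansion with limit `c`: a relaxed expansion in which
`‖w_k‖_{Z_k} = 1` for every `k ∈ N`. -/
def UnitaryExpansionFrom (Z : ℕ → Set E) (nrm : ℕ → E → ℝ) (v : ℕ → E) (c : E) : Prop :=
  ∃ (N : Set ℕ) (w : ℕ → E) (wn : ℕ → ℕ → E) (Γ : ℕ → ℕ → ℝ),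
    RelaxedExpansionWith 𝕜 Z nrm v c N w wn Γ ∧ ∀ k ∈ N, nrm k (w k) = 1

/-- `v` has a degenerate expansion with limit `c`: an infinite relaxed expansion
in which either all `w_k = 0`, or `‖w_k‖_{Z_k} = 1` for `1 ≤ k ≤ N0` and `w_k = 0`
for `k > N0`. -/
def DegenerateExpansionFrom (Z : ℕ → Set E) (nrm : ℕ → E → ℝ) (v : ℕ → E) (c : E) : Prop :=
  ∃ (w : ℕ → E) (wn : ℕ → ℕ → E) (Γ : ℕ → ℕ → ℝ),
    RelaxedCaseIII 𝕜 Z nrm v c w wn Γ ∧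
      ((∀ k, 1 ≤ k → w k = 0) ∨
        ∃ N0 : ℕ, 1 ≤ N0 ∧ (∀ k, 1 ≤ k → k ≤ N0 → nrm k (w k) = 1) ∧ ∀ k, N0 < k → w k = 0)

end ExpansionDefs

/-!
Put `r₀ n := v n - L`. At level `k` the normalised remainders `r_k n / ‖r_k n‖_k` lie in the
unit ball of `Z k`, so by compactness of `Z k ⊆ Z (k+1)` a subsequence of them converges in
`Z (k+1)` to some `w_{k+1}`. Setting `Γ_{k+1,n} := ‖r_k n‖_k` and
`r_{k+1} n := r_k n - Γ_{k+1,n} w_{k+1}`, the ratio `Γ_{k+2,n} / Γ_{k+1,n}` is the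
`Z (k+1)`-distance from the normalised remainder to `w_{k+1}`, hence tends to `0`. If at some
level the remainders vanish along the current subsequence, the expansion is finite (cases I
and II); otherwise a diagonal subsequence carries the infinite expansion (case III).
-/

open Filter Topology

section GreedyExtraction

variable {𝕜 : Type*} [RCLike 𝕜] {E : Type*} [AddCommGroup E] [Module 𝕜 E]

namespace IsNormedSubspace

variable {S : Set E} {nrm : E → ℝ} {x y : E}

theorem smul_mem (hS : IsNormedSubspace 𝕜 S nrm) (c : 𝕜) (hx : x ∈ S) : c • x ∈ S :=
  hS.2.2.1 c x hx

theorem sub_mem (hS : IsNormedSubspace 𝕜 S nrm) (hx : x ∈ S) (hy : y ∈ S) : x - y ∈ S := by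
  rw [sub_eq_add_neg, ← neg_one_smul 𝕜 y]
  exact hS.2.1 x hx _ (hS.smul_mem (-1) hy)

theorem nrm_pos (hS : IsNormedSubspace 𝕜 S nrm) (hx : x ∈ S) (hx0 : x ≠ 0) : 0 < nrm x :=
  (hS.2.2.2.1 x hx).lt_of_ne fun h => hx0 ((hS.2.2.2.2.1 x hx).1 h.symm)

theorem nrm_algebraMap_smul (hS : IsNormedSubspace 𝕜 S nrm) (a : ℝ) (hx : x ∈ S) :
    nrm (algebraMap ℝ 𝕜 a • x) = |a| * nrm x := by
  rw [hS.2.2.2.2.2.2 _ x hx, norm_algebraMap', Real.norm_eq_abs]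

end IsNormedSubspace

open Classical in
noncomputable def normOrOne (nrm : E → ℝ) (x : E) : ℝ :=
  if x = 0 then 1 else nrm x

variable (𝕜) in
noncomputable def normalized (nrm : E → ℝ) (x : E) : E :=
  algebraMap ℝ 𝕜 (normOrOne nrm x)⁻¹ • x

namespace IsNormedSubspace

variable {S : Set E} {nrm : E → ℝ} {x : E}

theorem normOrOne_pos (hS : IsNormedSubspace 𝕜 S nrm) (hx : x ∈ S) : 0 < normOrOne nrm x := by
  unfold normOrOne
  split_ifs with hx0
  exacts [one_pos, hS.nrm_pos hx hx0]

theorem smul_normalized (hS : IsNormedSubspace 𝕜 S nrm) (hx : x ∈ S) :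
    algebraMap ℝ 𝕜 (normOrOne nrm x) • normalized 𝕜 nrm x = x := by
  rw [normalized, smul_smul, ← map_mul, mul_inv_cancel₀ (hS.normOrOne_pos hx).ne', map_one,
    one_smul]

theorem normalized_mem (hS : IsNormedSubspace 𝕜 S nrm) (hx : x ∈ S) : normalized 𝕜 nrm x ∈ S :=
  hS.smul_mem _ hx

theorem nrm_normalized (hS : IsNormedSubspace 𝕜 S nrm) (hx : x ∈ S) (hx0 : x ≠ 0) :
    nrm (normalized 𝕜 nrm x) = 1 := by
  have hpos := hS.nrm_pos hx hx0
  rw [normalized, hS.nrm_algebraMap_smul _ hx, normOrOne, if_neg hx0, abs_inv, abs_of_pos hpos,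
    inv_mul_cancel₀ hpos.ne']

theorem nrm_normalized_le_one (hS : IsNormedSubspace 𝕜 S nrm) (hx : x ∈ S) :
    nrm (normalized 𝕜 nrm x) ≤ 1 := by
  by_cases hx0 : x = 0
  · rw [hx0, normalized, smul_zero, (hS.2.2.2.2.1 0 hS.1).2 rfl]
    exact zero_le_one
  · exact (hS.nrm_normalized hx hx0).le

end IsNormedSubspace

namespace IsNestedFamily

variable {Z : ℕ → Set E} {nrm : ℕ → E → ℝ}

theorem normed (hZ : IsNestedFamily 𝕜 Z nrm) (k : ℕ) : IsNormedSubspace 𝕜 (Z k) (nrm k) :=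
  hZ.1 k

theorem monotone (hZ : IsNestedFamily 𝕜 Z nrm) : Monotone Z :=
  monotone_nat_of_le_succ hZ.2.1

end IsNestedFamily

section GreedyExpansion

variable {Z : ℕ → Set E} {nrm : ℕ → E → ℝ} {r : ℕ → ℕ → E} {w : ℕ → E} {k n : ℕ}

/- `r k n` is the remainder of the `n`-th term after `k` greedy steps; the coefficient and
the direction of index `k ≥ 1` are read off from `r (k - 1)`. -/
noncomputable def expCoeff (nrm : ℕ → E → ℝ) (r : ℕ → ℕ → E) (k n : ℕ) : ℝ :=
  normOrOne (nrm (k - 1)) (r (k - 1) n)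

variable (𝕜) in
noncomputable def expDir (nrm : ℕ → E → ℝ) (r : ℕ → ℕ → E) (k n : ℕ) : E :=
  normalized 𝕜 (nrm (k - 1)) (r (k - 1) n)

variable (𝕜) in
def IsGreedyRemainder (nrm : ℕ → E → ℝ) (r : ℕ → ℕ → E) (w : ℕ → E) : Prop :=
  ∀ k n, r (k + 1) n = r k n - algebraMap ℝ 𝕜 (expCoeff nrm r (k + 1) n) • w (k + 1)

theorem rem_zero_eq_expPartialSum_add
    (hr : IsGreedyRemainder 𝕜 nrm r w)
    (k n : ℕ) : r 0 n = expPartialSum 𝕜 w (expCoeff nrm r) k n + r k n := by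
  induction k with
  | zero => simp [expPartialSum]
  | succ k ih =>
    rw [ih, expPartialSum, expPartialSum, Finset.sum_Icc_succ_top (Nat.le_add_left 1 k), hr]
    abel

theorem expCoeff_pos (hZ : IsNestedFamily 𝕜 Z nrm) (hrk : r (k - 1) n ∈ Z (k - 1)) :
    0 < expCoeff nrm r k n :=
  (hZ.normed _).normOrOne_pos hrk

theorem expDir_mem (hZ : IsNestedFamily 𝕜 Z nrm) (hrk : r (k - 1) n ∈ Z (k - 1)) :
    expDir 𝕜 nrm r k n ∈ Z (k - 1) :=
  (hZ.normed _).normalized_mem hrk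

theorem nrm_expDir (hZ : IsNestedFamily 𝕜 Z nrm) (hrk : r (k - 1) n ∈ Z (k - 1))
    (hne : r (k - 1) n ≠ 0) : nrm (k - 1) (expDir 𝕜 nrm r k n) = 1 :=
  (hZ.normed _).nrm_normalized hrk hne

theorem smul_expDir (hZ : IsNestedFamily 𝕜 Z nrm) (hrk : r (k - 1) n ∈ Z (k - 1)) :
    algebraMap ℝ 𝕜 (expCoeff nrm r k n) • expDir 𝕜 nrm r k n = r (k - 1) n :=
  (hZ.normed _).smul_normalized hrk

theorem eq_add_expPartialSum_add (hZ : IsNestedFamily 𝕜 Z nrm)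
    (hr : IsGreedyRemainder 𝕜 nrm r w)
    {v : ℕ → E} {L : E} (hv : r 0 n = v n - L) (hrk : r (k - 1) n ∈ Z (k - 1)) :
    v n = L + expPartialSum 𝕜 w (expCoeff nrm r) (k - 1) n +
      algebraMap ℝ 𝕜 (expCoeff nrm r k n) • expDir 𝕜 nrm r k n := by
  rw [smul_expDir hZ hrk, add_assoc, ← rem_zero_eq_expPartialSum_add hr, hv, add_sub_cancel]

theorem rem_eq_smul_expDir_sub (hZ : IsNestedFamily 𝕜 Z nrm)
    (hr : IsGreedyRemainder 𝕜 nrm r w)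
    (hk : 1 ≤ k) (hrk : r (k - 1) n ∈ Z (k - 1)) :
    r k n = algebraMap ℝ 𝕜 (expCoeff nrm r k n) • (expDir 𝕜 nrm r k n - w k) := by
  obtain ⟨k, rfl⟩ := Nat.exists_eq_add_of_le' hk
  rw [smul_sub, smul_expDir hZ hrk]
  exact hr k n

theorem expCoeff_succ_div (hZ : IsNestedFamily 𝕜 Z nrm)
    (hr : IsGreedyRemainder 𝕜 nrm r w)
    (hk : 1 ≤ k) (hrk : r (k - 1) n ∈ Z (k - 1)) (hw : w k ∈ Z k) (hne : r k n ≠ 0) :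
    expCoeff nrm r (k + 1) n / expCoeff nrm r k n = nrm k (expDir 𝕜 nrm r k n - w k) := by
  have hpos := expCoeff_pos hZ hrk
  have hdiff : expDir 𝕜 nrm r k n - w k ∈ Z k :=
    (hZ.normed k).sub_mem (hZ.monotone (Nat.sub_le k 1) (expDir_mem hZ hrk)) hw
  have hsucc : expCoeff nrm r (k + 1) n = nrm k (r k n) := if_neg hne
  rw [hsucc, rem_eq_smul_expDir_sub hZ hr hk hrk, (hZ.normed k).nrm_algebraMap_smul _ hdiff,
    abs_of_pos hpos, mul_div_cancel_left₀ _ hpos.ne']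

theorem expDir_eq_of_rem_eq_zero (hZ : IsNestedFamily 𝕜 Z nrm)
    (hr : IsGreedyRemainder 𝕜 nrm r w)
    (hk : 1 ≤ k) (hrk : r (k - 1) n ∈ Z (k - 1)) (h0 : r k n = 0) :
    expDir 𝕜 nrm r k n = w k := by
  rw [rem_eq_smul_expDir_sub hZ hr hk hrk, smul_eq_zero,
    map_eq_zero_iff _ (algebraMap ℝ 𝕜).injective] at h0
  exact sub_eq_zero.1 (h0.resolve_left (expCoeff_pos hZ hrk).ne')

end GreedyExpansion

section GreedyExpansionCases

variable {Z : ℕ → Set E} {nrm : ℕ → E → ℝ} {r : ℕ → ℕ → E} {w : ℕ → E} {v : ℕ → E} {L : E}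

theorem tendsto_expCoeff_one (hv : ∀ n, r 0 n = v n - L)
    (hvL : Tendsto (fun n => nrm 0 (v n - L)) atTop (𝓝 0)) (hne : ∀ᶠ n in atTop, r 0 n ≠ 0) :
    Tendsto (fun n => expCoeff nrm r 1 n) atTop (𝓝 0) := by
  refine hvL.congr' (hne.mono fun n hn => ?_)
  rw [← hv]
  exact (if_neg hn).symm

theorem tendsto_expCoeff_succ_div (hZ : IsNestedFamily 𝕜 Z nrm)
    (hr : IsGreedyRemainder 𝕜 nrm r w)
    (hrZ : ∀ k n, r k n ∈ Z k) (hw : ∀ k, 1 ≤ k → w k ∈ Z k) {k : ℕ} (hk : 1 ≤ k)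
    (hne : ∀ᶠ n in atTop, r k n ≠ 0)
    (hlim : Tendsto (fun n => nrm k (expDir 𝕜 nrm r k n - w k)) atTop (𝓝 0)) :
    Tendsto (fun n => expCoeff nrm r (k + 1) n / expCoeff nrm r k n) atTop (𝓝 0) :=
  hlim.congr' <| hne.mono fun _ hn => (expCoeff_succ_div hZ hr hk (hrZ _ _) (hw k hk) hn).symm

theorem strictCaseII_expCoeff (hZ : IsNestedFamily 𝕜 Z nrm)
    (hr : IsGreedyRemainder 𝕜 nrm r w)
    (hrZ : ∀ k n, r k n ∈ Z k) (hw : ∀ k, 1 ≤ k → w k ∈ Z k) (hv : ∀ n, r 0 n = v n - L)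
    (hL : L ∈ Z 0) (hvL : Tendsto (fun n => nrm 0 (v n - L)) atTop (𝓝 0)) {K : ℕ} (hK : 1 ≤ K)
    (hne : ∀ k < K, ∀ n, r k n ≠ 0) (hzero : ∀ n, r K n = 0)
    (hlim : ∀ k, 1 ≤ k → k ≤ K →
      Tendsto (fun n => nrm k (expDir 𝕜 nrm r k n - w k)) atTop (𝓝 0)) :
    StrictCaseII 𝕜 Z nrm v L K w (expDir 𝕜 nrm r) (expCoeff nrm r) :=
  ⟨hK, hL, fun k hk _ => hw k hk, fun _ _ _ _ => expDir_mem hZ (hrZ _ _),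
    fun _ _ _ _ => expCoeff_pos hZ (hrZ _ _),
    tendsto_expCoeff_one hv hvL (Eventually.of_forall (hne 0 hK)),
    fun k hk hkK => tendsto_expCoeff_succ_div hZ hr hrZ hw hk
      (Eventually.of_forall (hne k hkK)) (hlim k hk hkK.le),
    hlim, fun k _ hkK n => nrm_expDir hZ (hrZ _ _) (hne _ (by omega) n),
    fun _ _ _ _ => eq_add_expPartialSum_add hZ hr (hv _) (hrZ _ _),
    fun n => expDir_eq_of_rem_eq_zero hZ hr hK (hrZ _ _) (hzero n)⟩

theorem exists_strictCaseIII_expCoeff (hZ : IsNestedFamily 𝕜 Z nrm)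
    (hr : IsGreedyRemainder 𝕜 nrm r w)
    (hrZ : ∀ k n, r k n ∈ Z k) (hw : ∀ k, 1 ≤ k → w k ∈ Z k) (hv : ∀ n, r 0 n = v n - L)
    (hL : L ∈ Z 0) (hvL : Tendsto (fun n => nrm 0 (v n - L)) atTop (𝓝 0))
    (hne : ∀ k, ∀ᶠ n in atTop, r k n ≠ 0)
    (hlim : ∀ k, 1 ≤ k → Tendsto (fun n => nrm k (expDir 𝕜 nrm r k n - w k)) atTop (𝓝 0)) :
    ∃ Nk, StrictCaseIII 𝕜 Z nrm v L w (expDir 𝕜 nrm r) (expCoeff nrm r) Nk := by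
  choose N hN using fun k => eventually_atTop.1 (hne k)
  exact ⟨fun k => N (k - 1) + 1, hL, hw, fun _ _ _ => expDir_mem hZ (hrZ _ _),
    fun _ _ _ => expCoeff_pos hZ (hrZ _ _), fun _ _ => Nat.le_add_left 1 _,
    tendsto_expCoeff_one hv hvL (hne 0),
    fun k hk => tendsto_expCoeff_succ_div hZ hr hrZ hw hk (hne k) (hlim k hk), hlim,
    fun _ _ _ => eq_add_expPartialSum_add hZ hr (hv _) (hrZ _ _),
    fun k _ n hn => nrm_expDir hZ (hrZ _ _) (hN (k - 1) n (Nat.le_of_succ_le hn))⟩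

end GreedyExpansionCases

theorem exists_seq_of_forall_exists {α : Type*} (P : ℕ → α → Prop) (R : ℕ → α → α → Prop)
    {a : α} (ha : P 0 a) (h : ∀ k x, P k x → ∃ y, R k x y ∧ P (k + 1) y) :
    ∃ f : ℕ → α, f 0 = a ∧ ∀ k, R k (f k) (f (k + 1)) ∧ P k (f k) := by
  choose! g hg using h
  let f : ℕ → α := fun k => Nat.rec (motive := fun _ => α) a (fun k x => g k x) k
  have hf : ∀ k, P k (f k) := fun k => by
    induction k with
    | zero => exact ha
    | succ k ih => exact (hg k _ ih).2
  exact ⟨f, rfl, fun k => ⟨(hg k _ (hf k)).1, hf k⟩⟩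

theorem exists_strictMono_forall_or_forall_not (p : ℕ → Prop) :
    ∃ σ : ℕ → ℕ, StrictMono σ ∧ ((∀ n, p (σ n)) ∨ ∀ n, ¬ p (σ n)) := by
  by_cases h : ∃ᶠ n in atTop, p n
  · obtain ⟨σ, hσ, hp⟩ := extraction_of_frequently_atTop h
    exact ⟨σ, hσ, Or.inl hp⟩
  · obtain ⟨σ, hσ, hp⟩ := extraction_of_eventually_atTop (not_frequently.1 h)
    exact ⟨σ, hσ, Or.inr hp⟩

theorem strictMono_diagonal {φ : ℕ → ℕ → ℕ} (hφ : ∀ k, StrictMono (φ k))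
    (hsucc : ∀ k, ∃ g, StrictMono g ∧ φ (k + 1) = φ k ∘ g) : StrictMono fun n => φ n n := by
  refine strictMono_nat_of_lt_succ fun n => ?_
  obtain ⟨g, hg, hφg⟩ := hsucc n
  calc φ n n < φ n (n + 1) := hφ n n.lt_succ_self
    _ ≤ φ n (g (n + 1)) := (hφ n).monotone hg.le_apply
    _ = φ (n + 1) (n + 1) := (congrFun hφg _).symm

theorem exists_strictMono_comp_of_le {φ : ℕ → ℕ → ℕ}
    (hsucc : ∀ k, ∃ g, StrictMono g ∧ φ (k + 1) = φ k ∘ g) {k j : ℕ} (hkj : k ≤ j) :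
    ∃ g, StrictMono g ∧ φ j = φ k ∘ g := by
  induction j, hkj using Nat.le_induction with
  | base => exact ⟨id, strictMono_id, rfl⟩
  | succ j _ ih =>
    obtain ⟨g, hg, hφg⟩ := ih
    obtain ⟨g', hg', hφg'⟩ := hsucc j
    exact ⟨g ∘ g', hg.comp hg', by rw [hφg', hφg]; rfl⟩

theorem tendsto_diagonal_map {φ : ℕ → ℕ → ℕ}
    (hsucc : ∀ k, ∃ g, StrictMono g ∧ φ (k + 1) = φ k ∘ g) (k : ℕ) :
    Tendsto (fun n => φ n n) atTop (map (φ k) atTop) := by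
  rw [(atTop_basis.map _).tendsto_right_iff]
  intro m _
  filter_upwards [eventually_ge_atTop (max k m)] with n hn
  obtain ⟨g, hg, hφg⟩ := exists_strictMono_comp_of_le hsucc (le_of_max_le_left hn)
  exact ⟨g n, (le_of_max_le_right hn).trans hg.le_apply, (congrFun hφg n).symm⟩

theorem HasCompactEmbeddings.exists_tendsto_normalized {Z : ℕ → Set E} {nrm : ℕ → E → ℝ}
    (hcomp : HasCompactEmbeddings Z nrm) (hZ : IsNestedFamily 𝕜 Z nrm) (k : ℕ) {x : ℕ → E}
    (hx : ∀ n, x n ∈ Z k) :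
    ∃ τ : ℕ → ℕ, StrictMono τ ∧ ∃ c ∈ Z (k + 1),
      Tendsto (fun n => nrm (k + 1) (normalized 𝕜 (nrm k) (x (τ n)) - c)) atTop (𝓝 0) :=
  hcomp k _ (fun n => (hZ.normed k).normalized_mem (hx n))
    ⟨1, fun n => (hZ.normed k).nrm_normalized_le_one (hx n)⟩

/- The state after `k` greedy steps: the indices kept so far, the remainders of all terms
(indexed by the original index) and the last direction `w k`. -/
structure Extraction (E : Type*) where
  subseq : ℕ → ℕ
  rem : ℕ → E
  dir : E

section Extraction

variable {Z : ℕ → Set E} {nrm : ℕ → E → ℝ}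

variable (𝕜) in
def IsExtractionStep (Z : ℕ → Set E) (nrm : ℕ → E → ℝ) (k : ℕ) (s t : Extraction E) : Prop :=
  (∃ σ : ℕ → ℕ, StrictMono σ ∧ t.subseq = s.subseq ∘ σ) ∧ t.dir ∈ Z (k + 1) ∧
    (∀ i, t.rem i = s.rem i - algebraMap ℝ 𝕜 (normOrOne (nrm k) (s.rem i)) • t.dir) ∧
    ((∀ n, s.rem (t.subseq n) = 0) ∨
      (∀ n, s.rem (t.subseq n) ≠ 0) ∧
        Tendsto (fun n => nrm (k + 1) (normalized 𝕜 (nrm k) (s.rem (t.subseq n)) - t.dir))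
          atTop (𝓝 0))

theorem exists_isExtractionStep (hZ : IsNestedFamily 𝕜 Z nrm)
    (hcomp : HasCompactEmbeddings Z nrm) (k : ℕ) (s : Extraction E)
    (hs : ∀ i, s.rem i ∈ Z k) :
    ∃ t, IsExtractionStep 𝕜 Z nrm k s t ∧ ∀ i, t.rem i ∈ Z (k + 1) := by
  suffices ∃ t, IsExtractionStep 𝕜 Z nrm k s t by
    obtain ⟨t, ht⟩ := this
    refine ⟨t, ht, fun i => ?_⟩
    rw [ht.2.2.1 i]
    exact (hZ.normed _).sub_mem (hZ.monotone k.le_succ (hs i)) ((hZ.normed _).smul_mem _ ht.2.1)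
  obtain ⟨σ, hσ, hzero | hne⟩ :=
    exists_strictMono_forall_or_forall_not fun n => s.rem (s.subseq n) = 0
  · refine ⟨⟨s.subseq ∘ σ, fun i => s.rem i - algebraMap ℝ 𝕜 (normOrOne (nrm k) (s.rem i)) • 0,
      0⟩, ⟨σ, hσ, rfl⟩, (hZ.normed _).1, fun _ => rfl, Or.inl hzero⟩
  · obtain ⟨τ, hτ, c, hc, hlim⟩ := hcomp.exists_tendsto_normalized hZ k fun n => hs (s.subseq (σ n))
    refine ⟨⟨s.subseq ∘ σ ∘ τ, fun i => s.rem i - algebraMap ℝ 𝕜 (normOrOne (nrm k) (s.rem i)) • c,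
      c⟩, ⟨σ ∘ τ, hσ.comp hτ, rfl⟩, hc, fun _ => rfl, Or.inr ⟨fun n => hne (τ n), hlim⟩⟩

theorem exists_extraction_seq (hZ : IsNestedFamily 𝕜 Z nrm) (hcomp : HasCompactEmbeddings Z nrm)
    {b : ℕ → E} (hb : ∀ i, b i ∈ Z 0) :
    ∃ S : ℕ → Extraction E, S 0 = ⟨id, b, 0⟩ ∧
      ∀ k, IsExtractionStep 𝕜 Z nrm k (S k) (S (k + 1)) ∧ ∀ i, (S k).rem i ∈ Z k :=
  exists_seq_of_forall_exists (fun k (s : Extraction E) => ∀ i, s.rem i ∈ Z k) _ hb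
    (exists_isExtractionStep hZ hcomp)

end Extraction

section ExtractionSeq

variable {Z : ℕ → Set E} {nrm : ℕ → E → ℝ} {S : ℕ → Extraction E} {v : ℕ → E} {L : E}

theorem dir_mem_of_isExtractionStep (hS : ∀ k, IsExtractionStep 𝕜 Z nrm k (S k) (S (k + 1)))
    {k : ℕ} (hk : 1 ≤ k) : (S k).dir ∈ Z k := by
  obtain ⟨j, rfl⟩ := Nat.exists_eq_add_of_le' hk
  exact (hS j).2.1

theorem subseq_strictMono_of_isExtractionStep
    (hS : ∀ k, IsExtractionStep 𝕜 Z nrm k (S k) (S (k + 1))) (h0 : (S 0).subseq = id)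
    (k : ℕ) : StrictMono (S k).subseq := by
  induction k with
  | zero => exact h0 ▸ strictMono_id
  | succ k ih =>
    obtain ⟨σ, hσ, hsub⟩ := (hS k).1
    rw [hsub]
    exact ih.comp hσ

theorem exists_subseq_hasStrictExpansion_of_vanishing (hZ : IsNestedFamily 𝕜 Z nrm)
    (hS : ∀ k, IsExtractionStep 𝕜 Z nrm k (S k) (S (k + 1)) ∧ ∀ i, (S k).rem i ∈ Z k)
    (hS0 : S 0 = ⟨id, fun i => v i - L, 0⟩) (hL : L ∈ Z 0)
    (hvL : Tendsto (fun n => nrm 0 (v n - L)) atTop (𝓝 0)) {K : ℕ}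
    (hK : ∀ n, (S K).rem ((S (K + 1)).subseq n) = 0)
    (hmin : ∀ k < K, ¬ ∀ n, (S k).rem ((S (k + 1)).subseq n) = 0) :
    ∃ ψ : ℕ → ℕ, StrictMono ψ ∧ HasStrictExpansion 𝕜 Z nrm fun n => v (ψ n) := by
  have hψ := subseq_strictMono_of_isExtractionStep (fun k => (hS k).1) (by rw [hS0]) (K + 1)
  refine ⟨_, hψ, ?_⟩
  rcases Nat.eq_zero_or_pos K with rfl | hK1
  · rw [hS0] at hK
    exact ⟨L, ∅, 0, 0, 0, 0, Or.inl ⟨rfl, hL, fun n => sub_eq_zero.1 (hK n)⟩⟩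
  have hlevel : ∀ j < K, (∀ n, (S j).rem ((S (K + 1)).subseq n) ≠ 0) ∧
      Tendsto (fun n => nrm (j + 1) (normalized 𝕜 (nrm j) ((S j).rem ((S (K + 1)).subseq n)) -
        (S (j + 1)).dir)) atTop (𝓝 0) := by
    intro j hj
    obtain ⟨hne, hlim⟩ := (hS j).1.2.2.2.resolve_left (hmin j hj)
    obtain ⟨g, hg, hψg⟩ :=
      exists_strictMono_comp_of_le (φ := fun k => (S k).subseq) (fun k => (hS k).1.1)
        (show j + 1 ≤ K + 1 by omega)
    rw [hψg]
    exact ⟨fun n => hne (g n), hlim.comp hg.tendsto_atTop⟩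
  refine ⟨L, Set.Icc 1 K, fun k => (S k).dir,
    expDir 𝕜 nrm fun k n => (S k).rem ((S (K + 1)).subseq n),
    expCoeff nrm fun k n => (S k).rem ((S (K + 1)).subseq n), 0, Or.inr (Or.inl ⟨K, rfl, ?_⟩)⟩
  refine strictCaseII_expCoeff hZ (fun k n => (hS k).1.2.2.1 _) (fun k n => (hS k).2 _)
    (fun k => dir_mem_of_isExtractionStep fun j => (hS j).1) (fun n => by rw [hS0])
    hL (hvL.comp hψ.tendsto_atTop) hK1 (fun k hk => (hlevel k hk).1) hK fun k hk hkK => ?_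
  obtain ⟨j, rfl⟩ := Nat.exists_eq_add_of_le' hk
  exact (hlevel j (by omega)).2

theorem exists_subseq_hasStrictExpansion_of_forall_not_vanishing (hZ : IsNestedFamily 𝕜 Z nrm)
    (hS : ∀ k, IsExtractionStep 𝕜 Z nrm k (S k) (S (k + 1)) ∧ ∀ i, (S k).rem i ∈ Z k)
    (hS0 : S 0 = ⟨id, fun i => v i - L, 0⟩) (hL : L ∈ Z 0)
    (hvL : Tendsto (fun n => nrm 0 (v n - L)) atTop (𝓝 0))
    (hnot : ∀ k, ¬ ∀ n, (S k).rem ((S (k + 1)).subseq n) = 0) :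
    ∃ ψ : ℕ → ℕ, StrictMono ψ ∧ HasStrictExpansion 𝕜 Z nrm fun n => v (ψ n) := by
  have hsucc : ∀ k, ∃ g, StrictMono g ∧ (S (k + 1 + 1)).subseq = (S (k + 1)).subseq ∘ g :=
    fun k => (hS (k + 1)).1.1
  have hψ := strictMono_diagonal (φ := fun k => (S (k + 1)).subseq)
    (fun k => subseq_strictMono_of_isExtractionStep (fun k => (hS k).1) (by rw [hS0]) (k + 1))
    hsucc
  have hlevel : ∀ j, (∀ᶠ n in atTop, (S j).rem ((S (n + 1)).subseq n) ≠ 0) ∧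
      Tendsto (fun n => nrm (j + 1) (normalized 𝕜 (nrm j) ((S j).rem ((S (n + 1)).subseq n)) -
        (S (j + 1)).dir)) atTop (𝓝 0) := by
    intro j
    obtain ⟨hne, hlim⟩ := (hS j).1.2.2.2.resolve_left (hnot j)
    have hdiag := tendsto_diagonal_map (φ := fun k => (S (k + 1)).subseq) hsucc j
    exact ⟨hdiag.eventually (eventually_map.2 (Eventually.of_forall hne) :
        ∀ᶠ i in map (S (j + 1)).subseq atTop, (S j).rem i ≠ 0),
      (tendsto_map'_iff (f := fun i => nrm (j + 1) (normalized 𝕜 (nrm j) ((S j).rem i) -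
        (S (j + 1)).dir))).2 hlim |>.comp hdiag⟩
  obtain ⟨Nk, hIII⟩ := exists_strictCaseIII_expCoeff hZ (fun k n => (hS k).1.2.2.1 _)
    (fun k n => (hS k).2 _) (fun k => dir_mem_of_isExtractionStep fun j => (hS j).1)
    (fun n => by rw [hS0]) hL (hvL.comp hψ.tendsto_atTop) (fun k => (hlevel k).1) fun k hk => by
      obtain ⟨j, rfl⟩ := Nat.exists_eq_add_of_le' hk
      exact (hlevel j).2
  exact ⟨_, hψ, L, {k | 1 ≤ k}, _, _, _, Nk, Or.inr (Or.inr ⟨rfl, hIII⟩)⟩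

end ExtractionSeq

end GreedyExtraction

/-- every convergent sequence in `Z 0` of a nested family with compact
embeddings has a subsequence possessing a strict expansion in the family. -/
theorem strict_expansion_of_compact_embeddings
    (𝕜 : Type*) [RCLike 𝕜] {E : Type*} [AddCommGroup E] [Module 𝕜 E]
    (Z : ℕ → Set E) (nrm : ℕ → E → ℝ)
    (hfam : IsNestedFamily 𝕜 Z nrm) (hcomp : HasCompactEmbeddings Z nrm)
    (v : ℕ → E) (hv : ∀ n, v n ∈ Z 0)
    (hconv : ∃ L ∈ Z 0, Tendsto (fun n => nrm 0 (v n - L)) atTop (nhds 0)) :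
    ∃ ψ : ℕ → ℕ, StrictMono ψ ∧ HasStrictExpansion 𝕜 Z nrm (fun n => v (ψ n)) := by
  classical
  obtain ⟨L, hL, hvL⟩ := hconv
  obtain ⟨S, hS0, hS⟩ :=
    exists_extraction_seq hfam hcomp fun i => (hfam.normed 0).sub_mem (hv i) hL
  by_cases hvan : ∃ k, ∀ n, (S k).rem ((S (k + 1)).subseq n) = 0
  · exact exists_subseq_hasStrictExpansion_of_vanishing hfam hS hS0 hL hvL
      (Nat.find_spec hvan) fun k => Nat.find_min hvan
  · exact exists_subseq_hasStrictExpansion_of_forall_not_vanishing hfam hS hS0 hL hvL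
      (not_exists.1 hvan)
end

section
/- Let (α_k)_{k≥0} be a strictly decreasing sequence of positive reals, let g ∈ D(A^{α_0}) satisfy Q_n g ≠ 0 for all n ≥ 1, let β = inf{α_k : k ≥ 1}, and let s ∈ [0, β]. For k, n ≥ 1 set Γ_{k,n} = ‖Q_n g‖_{D(A^{α_k})}, w_k = 0 and w_{k,n} = −Q_n g / Γ_{k,n}. Then the sequence (P_n g)_{n≥1} has the degenerate expansion P_n g ≈ g + Σ_{k≥1} Γ_{k,n}·0 in the single space D(A^s), witnessed by the remainders w_{k,n}; specifically: P_n g = g + Γ_{k,n} w_{k,n} for all k, n ≥ 1; Γ_{1,n} → 0 as n → ∞; Γ_{k+1,n}/Γ_{k,n} → 0 as n → ∞ for each k ≥ 1; and ‖w_{k,n}‖_{D(A^s)} ≤ λ_{n+1}^{s−α_k} → 0 as n → ∞ for each k ≥ 1. -/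
open Filter

section FractionalSpaces

variable {H : Type*} [NormedAddCommGroup H] [InnerProductSpace ℝ H]

/-- The `j`-th term of the series defining the `D(A^α)` norm. -/
noncomputable def sobTerm (lam : ℕ → ℝ) (e : ℕ → H) (α : ℝ) (u : H) (j : ℕ) : ℝ :=
  lam j ^ (2 * α) * (@inner ℝ H _ u (e j)) ^ 2

/-- Membership in the fractional space `D(A^α)`. -/
def memDA (lam : ℕ → ℝ) (e : ℕ → H) (α : ℝ) (u : H) : Prop :=
  Summable (sobTerm lam e α u)

/-- The `D(A^α)` norm `‖u‖_{D(A^α)} = (∑ λ_j^{2α} ⟨u, e_j⟩²)^{1/2}`. -/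
noncomputable def sobNorm (lam : ℕ → ℝ) (e : ℕ → H) (α : ℝ) (u : H) : ℝ :=
  Real.sqrt (∑' j, sobTerm lam e α u j)

/-- Orthogonal projection `P_n` onto the span of the first `n` eigenfunctions
(the paper's `φ_1, …, φ_n` are `e 0, …, e (n-1)` here). -/
noncomputable def projP (e : ℕ → H) (n : ℕ) (u : H) : H :=
  ∑ j ∈ Finset.range n, (@inner ℝ H _ u (e j)) • e j

/-- The complementary projection `Q_n = Id − P_n`. -/
noncomputable def projQ (e : ℕ → H) (n : ℕ) (u : H) : H :=
  u - projP e n u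

/-- The operator `A u = ∑ λ_j ⟨u, e_j⟩ e_j`. -/
noncomputable def opA (lam : ℕ → ℝ) (e : ℕ → H) (u : H) : H :=
  ∑' j, (lam j * @inner ℝ H _ u (e j)) • e j

/-- `e` is an orthonormal Hilbert basis of `H` consisting of eigenfunctions with
nondecreasing eigenvalues `lam j ≥ lam 0 ≥ 1` tending to infinity.  (`e j` and
`lam j` correspond to the paper's `φ_{j+1}` and `λ_{j+1}`, so the paper's
`λ_{n+1}` is `lam n`.) -/
def IsEigenBasis (lam : ℕ → ℝ) (e : ℕ → H) : Prop :=
  Orthonormal ℝ e ∧ (Submodule.span ℝ (Set.range e)).topologicalClosure = ⊤ ∧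
    Monotone lam ∧ 1 ≤ lam 0 ∧ Tendsto lam atTop atTop


section Helpers

variable {H : Type*} [NormedAddCommGroup H] [InnerProductSpace ℝ H]
variable {lam : ℕ → ℝ} {e : ℕ → H}

lemma sobTerm_nonneg (hlam : ∀ j, 0 ≤ lam j) (α : ℝ) (u : H) (j : ℕ) :
    0 ≤ sobTerm lam e α u j :=
  mul_nonneg (Real.rpow_nonneg (hlam j) _) (sq_nonneg _)

lemma sobNorm_nonneg (a : ℝ) (u : H) : 0 ≤ sobNorm lam e a u :=
  Real.sqrt_nonneg _

lemma inner_projP (horth : Orthonormal ℝ e) (n : ℕ) (u : H) (j : ℕ) :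
    @inner ℝ H _ (projP e n u) (e j) = if j < n then @inner ℝ H _ u (e j) else 0 := by
  rw [projP, sum_inner]
  have h := orthonormal_iff_ite.mp horth
  simp only [real_inner_smul_left, h, mul_ite, mul_one, mul_zero]
  rw [Finset.sum_ite_eq' (Finset.range n) j]
  simp [Finset.mem_range]

lemma inner_projQ (horth : Orthonormal ℝ e) (n : ℕ) (u : H) (j : ℕ) :
    @inner ℝ H _ (projQ e n u) (e j) = if j < n then 0 else @inner ℝ H _ u (e j) := by
  rw [projQ, inner_sub_left, inner_projP horth]
  split_ifs <;> ring

lemma sobTerm_projQ (horth : Orthonormal ℝ e) (α : ℝ) (n : ℕ) (u : H) (j : ℕ) :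
    sobTerm lam e α (projQ e n u) j = if j < n then 0 else sobTerm lam e α u j := by
  simp only [sobTerm, inner_projQ horth]
  split_ifs <;> simp

lemma sobTerm_smul (α : ℝ) (c : ℝ) (u : H) (j : ℕ) :
    sobTerm lam e α (c • u) j = c ^ 2 * sobTerm lam e α u j := by
  simp only [sobTerm, real_inner_smul_left]
  ring

lemma sobNorm_smul (α : ℝ) (c : ℝ) (u : H) :
    sobNorm lam e α (c • u) = |c| * sobNorm lam e α u := by
  simp only [sobNorm]
  rw [tsum_congr (sobTerm_smul α c u), tsum_mul_left, Real.sqrt_mul (sq_nonneg c),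
    Real.sqrt_sq_eq_abs]

lemma memDA_mono (hlam : ∀ j, 1 ≤ lam j) {a b : ℝ} (hab : a ≤ b) {u : H}
    (hu : memDA lam e b u) : memDA lam e a u := by
  refine hu.of_nonneg_of_le (fun j => sobTerm_nonneg (fun j => zero_le_one.trans (hlam j)) a u j)
    (fun j => ?_)
  exact mul_le_mul_of_nonneg_right
    (Real.rpow_le_rpow_of_exponent_le (hlam j) (by linarith)) (sq_nonneg _)

lemma memDA_projQ (horth : Orthonormal ℝ e) (hlam : ∀ j, 0 ≤ lam j) {a : ℝ} {u : H}
    (hu : memDA lam e a u) (n : ℕ) : memDA lam e a (projQ e n u) := by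
  refine hu.of_nonneg_of_le (fun j => sobTerm_nonneg hlam a _ j) (fun j => ?_)
  rw [sobTerm_projQ horth]
  split_ifs
  · exact sobTerm_nonneg hlam a u j
  · exact le_rfl

lemma tsum_sobTerm_projQ (horth : Orthonormal ℝ e) {a : ℝ} {u : H}
    (hu : memDA lam e a u) (n : ℕ) :
    ∑' j, sobTerm lam e a (projQ e n u) j
      = (∑' j, sobTerm lam e a u j) - ∑ j ∈ Finset.range n, sobTerm lam e a u j := by
  have h1 : ∀ j, sobTerm lam e a (projQ e n u) j
      = sobTerm lam e a u j - (if j < n then sobTerm lam e a u j else 0) := by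
    intro j; rw [sobTerm_projQ horth]; split_ifs <;> ring
  have hsum2 : Summable (fun j => if j < n then sobTerm lam e a u j else 0) := by
    apply summable_of_finite_support
    apply Set.Finite.subset (Set.finite_Iio n)
    intro j hj
    simp only [Function.mem_support] at hj
    by_contra h
    simp only [Set.mem_Iio, not_lt] at h
    rw [if_neg (not_lt.mpr h)] at hj
    exact hj rfl
  rw [tsum_congr h1, Summable.tsum_sub hu hsum2]
  congr 1
  rw [tsum_eq_sum (s := Finset.range n)]
  · exact Finset.sum_congr rfl fun j hj => if_pos (Finset.mem_range.mp hj)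
  · intro j hj
    exact if_neg (by simpa using hj)

lemma sobNorm_projQ_tendsto (horth : Orthonormal ℝ e) {a : ℝ} {u : H}
    (hu : memDA lam e a u) :
    Filter.Tendsto (fun n => sobNorm lam e a (projQ e n u)) Filter.atTop (nhds 0) := by
  have hT : Filter.Tendsto (fun n => ∑' j, sobTerm lam e a (projQ e n u) j)
      Filter.atTop (nhds 0) := by
    simp only [tsum_sobTerm_projQ horth hu]
    have h2 := hu.hasSum.tendsto_sum_nat.const_sub (∑' j, sobTerm lam e a u j)
    simpa using h2
  have := (Real.continuous_sqrt.tendsto 0).comp hT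
  simpa [sobNorm, Function.comp_def] using this

lemma sobNorm_projQ_le (horth : Orthonormal ℝ e) (hlam : ∀ j, 1 ≤ lam j)
    (hmono : Monotone lam) {a b : ℝ} (hab : a ≤ b) {u : H} (hu : memDA lam e b u) (n : ℕ) :
    sobNorm lam e a (projQ e n u) ≤ lam n ^ (a - b) * sobNorm lam e b (projQ e n u) := by
  have hlam0 : ∀ j, 0 ≤ lam j := fun j => zero_le_one.trans (hlam j)
  have hlamn : (0:ℝ) < lam n := lt_of_lt_of_le zero_lt_one (hlam n)
  have hsumb : Summable (sobTerm lam e b (projQ e n u)) := memDA_projQ horth hlam0 hu n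
  have hsuma : Summable (sobTerm lam e a (projQ e n u)) :=
    memDA_projQ horth hlam0 (memDA_mono hlam hab hu) n
  have key : ∑' j, sobTerm lam e a (projQ e n u) j
      ≤ lam n ^ (2 * (a - b)) * ∑' j, sobTerm lam e b (projQ e n u) j := by
    rw [← tsum_mul_left]
    refine Summable.tsum_le_tsum (fun j => ?_) hsuma (hsumb.mul_left _)
    rw [sobTerm_projQ horth, sobTerm_projQ horth]
    split_ifs with h
    · simp
    · push_neg at h
      have hlamj : (0:ℝ) < lam j := lt_of_lt_of_le zero_lt_one (hlam j)
      have h1 : lam j ^ (2 * a) = lam j ^ (2 * (a - b)) * lam j ^ (2 * b) := by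
        rw [← Real.rpow_add hlamj]; ring_nf
      have h2 : lam j ^ (2 * (a - b)) ≤ lam n ^ (2 * (a - b)) :=
        Real.rpow_le_rpow_of_nonpos hlamn (hmono h) (by linarith)
      calc lam j ^ (2 * a) * (@inner ℝ H _ u (e j)) ^ 2
          = lam j ^ (2 * (a - b)) * (lam j ^ (2 * b) * (@inner ℝ H _ u (e j)) ^ 2) := by
            rw [h1]; ring
        _ ≤ lam n ^ (2 * (a - b)) * (lam j ^ (2 * b) * (@inner ℝ H _ u (e j)) ^ 2) :=
            mul_le_mul_of_nonneg_right h2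
              (mul_nonneg (Real.rpow_nonneg (hlam0 j) _) (sq_nonneg _))
  have hsq : lam n ^ (2 * (a - b)) = (lam n ^ (a - b)) ^ 2 := by
    rw [← Real.rpow_natCast (lam n ^ (a - b)) 2, ← Real.rpow_mul (le_of_lt hlamn)]
    norm_num; ring_nf
  calc sobNorm lam e a (projQ e n u)
      ≤ Real.sqrt (lam n ^ (2 * (a - b)) * ∑' j, sobTerm lam e b (projQ e n u) j) :=
        Real.sqrt_le_sqrt key
    _ = lam n ^ (a - b) * sobNorm lam e b (projQ e n u) := by
        rw [hsq, Real.sqrt_mul (sq_nonneg _), Real.sqrt_sq (Real.rpow_nonneg hlamn.le _)]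
        rfl

lemma eq_zero_of_inner_eq_zero [CompleteSpace H]
    (hdense : (Submodule.span ℝ (Set.range e)).topologicalClosure = ⊤)
    {v : H} (hv : ∀ j, @inner ℝ H _ v (e j) = 0) : v = 0 := by
  have hmem : v ∈ (Submodule.span ℝ (Set.range e))ᗮ := by
    rw [Submodule.mem_orthogonal']
    intro u hu
    induction hu using Submodule.span_induction with
    | mem x hx => obtain ⟨j, rfl⟩ := hx; exact hv j
    | zero => exact inner_zero_right v
    | add x y _ _ hx hy => rw [inner_add_right, hx, hy, add_zero]
    | smul c x _ hx => rw [real_inner_smul_right, hx, mul_zero]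
  rw [Submodule.topologicalClosure_eq_top_iff] at hdense
  simpa [hdense] using hmem

lemma sobNorm_pos [CompleteSpace H]
    (hdense : (Submodule.span ℝ (Set.range e)).topologicalClosure = ⊤)
    (hlam : ∀ j, 1 ≤ lam j) {a : ℝ} {v : H} (hsum : Summable (sobTerm lam e a v))
    (hv : v ≠ 0) : 0 < sobNorm lam e a v := by
  have hlam0 : ∀ j, 0 ≤ lam j := fun j => zero_le_one.trans (hlam j)
  obtain ⟨j, hj⟩ : ∃ j, @inner ℝ H _ v (e j) ≠ 0 := by
    by_contra h
    push_neg at h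
    exact hv (eq_zero_of_inner_eq_zero hdense h)
  have hterm : 0 < sobTerm lam e a v j :=
    mul_pos (Real.rpow_pos_of_pos (lt_of_lt_of_le zero_lt_one (hlam j)) _) (by positivity)
  have := Summable.le_tsum hsum j (fun i _ => sobTerm_nonneg hlam0 a v i)
  exact Real.sqrt_pos.mpr (lt_of_lt_of_le hterm this)

end Helpers

end FractionalSpaces

/-- with `Γ_{k,n} = ‖Q_n g‖_{D(A^{α_k})}`, `w_k = 0` and
`w_{k,n} = −Q_n g / Γ_{k,n}`, the sequence `(P_n g)` has the degenerate expansion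
`P_n g ≈ g + ∑_k Γ_{k,n}·0` in the single space `D(A^s)` for any
`s ∈ [0, inf{α_k : k ≥ 1}]`: the listed identities, bounds and limits hold. -/
theorem projP_degenerate_expansion_single
    {H : Type*} [NormedAddCommGroup H] [InnerProductSpace ℝ H] [CompleteSpace H]
    (lam : ℕ → ℝ) (e : ℕ → H) (hbasis : IsEigenBasis lam e)
    (α : ℕ → ℝ) (hαpos : ∀ k, 0 < α k) (hαanti : StrictAnti α)
    (g : H) (hg : memDA lam e (α 0) g) (hQ : ∀ n, 1 ≤ n → projQ e n g ≠ 0)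
    (s : ℝ) (hs0 : 0 ≤ s) (hsβ : s ≤ ⨅ k, α (k + 1)) :
    (∀ k, 1 ≤ k → ∀ n, 1 ≤ n → 0 < sobNorm lam e (α k) (projQ e n g)) ∧
      (∀ k, 1 ≤ k → ∀ n, 1 ≤ n →
        projP e n g = g + sobNorm lam e (α k) (projQ e n g) •
          (-(sobNorm lam e (α k) (projQ e n g))⁻¹ • projQ e n g)) ∧
      Tendsto (fun n => sobNorm lam e (α 1) (projQ e n g)) atTop (nhds 0) ∧
      (∀ k, 1 ≤ k → Tendsto (fun n => sobNorm lam e (α (k + 1)) (projQ e n g) /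
          sobNorm lam e (α k) (projQ e n g)) atTop (nhds 0)) ∧
      ∀ k, 1 ≤ k →
        (∀ n, 1 ≤ n → sobNorm lam e s
            (-(sobNorm lam e (α k) (projQ e n g))⁻¹ • projQ e n g) ≤ lam n ^ (s - α k)) ∧
          Tendsto (fun n => sobNorm lam e s
            (-(sobNorm lam e (α k) (projQ e n g))⁻¹ • projQ e n g)) atTop (nhds 0) := by
  obtain ⟨horth, hdense, hmono, hlam1, hlamtop⟩ := hbasis
  have hlam : ∀ j, 1 ≤ lam j := fun j => hlam1.trans (hmono (Nat.zero_le j))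
  have hlam0 : ∀ j, 0 ≤ lam j := fun j => zero_le_one.trans (hlam j)
  have hbdd : BddBelow (Set.range fun k => α (k + 1)) :=
    ⟨0, by rintro x ⟨k, rfl⟩; exact (hαpos _).le⟩
  have hsk : ∀ k, s ≤ α (k + 1) := fun k => hsβ.trans (ciInf_le hbdd k)
  have hsk' : ∀ k, 1 ≤ k → s ≤ α k := by
    intro k hk
    cases k with
    | zero => omega
    | succ m => exact hsk m
  have hαle : ∀ k, α k ≤ α 0 := fun k => hαanti.antitone (Nat.zero_le k)
  have hg_k : ∀ k, memDA lam e (α k) g := fun k => memDA_mono hlam (hαle k) hg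
  have hΓpos : ∀ k n, 1 ≤ n → 0 < sobNorm lam e (α k) (projQ e n g) := fun k n hn =>
    sobNorm_pos hdense hlam (memDA_projQ horth hlam0 (hg_k k) n) (hQ n hn)
  refine ⟨fun k _ n hn => hΓpos k n hn, ?_, ?_, ?_, ?_⟩
  · -- identity
    intro k hk n hn
    have hΓ : sobNorm lam e (α k) (projQ e n g) ≠ 0 := (hΓpos k n hn).ne'
    rw [smul_smul]
    have hc : sobNorm lam e (α k) (projQ e n g) *
        -(sobNorm lam e (α k) (projQ e n g))⁻¹ = -1 := by
      field_simp
    rw [hc, neg_one_smul, projQ]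
    abel
  · -- Γ_{1,n} → 0
    exact sobNorm_projQ_tendsto horth (hg_k 1)
  · -- ratios
    intro k hk
    have hδ : 0 < α k - α (k + 1) := sub_pos.mpr (hαanti (lt_add_one k))
    have hub : Tendsto (fun n => lam n ^ (α (k + 1) - α k)) atTop (nhds 0) := by
      have := (tendsto_rpow_neg_atTop hδ).comp hlamtop
      simpa [Function.comp_def, neg_sub] using this
    refine tendsto_of_tendsto_of_tendsto_of_le_of_le' tendsto_const_nhds hub ?_ ?_
    · exact Eventually.of_forall fun n =>
        div_nonneg (sobNorm_nonneg _ _) (sobNorm_nonneg _ _)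
    · filter_upwards [eventually_ge_atTop 1] with n hn
      rw [div_le_iff₀ (hΓpos k n hn)]
      exact sobNorm_projQ_le horth hlam hmono (hαanti (lt_add_one k)).le (hg_k k) n
  · -- remainders
    intro k hk
    have hska : s ≤ α k := hsk' k hk
    have hslt : s < α k := lt_of_le_of_lt (hsk k) (hαanti (lt_add_one k))
    have hbound : ∀ n, 1 ≤ n → sobNorm lam e s
        (-(sobNorm lam e (α k) (projQ e n g))⁻¹ • projQ e n g) ≤ lam n ^ (s - α k) := by
      intro n hn
      have hΓ := hΓpos k n hn
      rw [sobNorm_smul, abs_neg, abs_inv, abs_of_pos hΓ]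
      have hb := sobNorm_projQ_le horth hlam hmono hska (hg_k k) n
      calc (sobNorm lam e (α k) (projQ e n g))⁻¹ * sobNorm lam e s (projQ e n g)
          ≤ (sobNorm lam e (α k) (projQ e n g))⁻¹ *
            (lam n ^ (s - α k) * sobNorm lam e (α k) (projQ e n g)) :=
            mul_le_mul_of_nonneg_left hb (inv_nonneg.mpr hΓ.le)
        _ = lam n ^ (s - α k) := by
            rw [mul_comm (lam n ^ (s - α k)), ← mul_assoc, inv_mul_cancel₀ hΓ.ne', one_mul]
    refine ⟨hbound, ?_⟩
    have hub : Tendsto (fun n => lam n ^ (s - α k)) atTop (nhds 0) := by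
      have := (tendsto_rpow_neg_atTop (sub_pos.mpr hslt)).comp hlamtop
      simpa [Function.comp_def, neg_sub] using this
    refine tendsto_of_tendsto_of_tendsto_of_le_of_le' tendsto_const_nhds hub ?_ ?_
    · exact Eventually.of_forall fun n => sobNorm_nonneg _ _
    · filter_upwards [eventually_ge_atTop 1] with n hn using hbound n hn
end

section
/- Let β ≥ 0 be a real number. Let w_1 and w_{1,n} (n ≥ 1) belong to D(A^{1+β}) with ‖w_{1,n} − w_1‖_{D(A^{1+β})} → 0, let b_1 and b_{1,n} (n ≥ 1) belong to D(A^β) with ‖b_{1,n} − b_1‖_{D(A^β)} → 0, let f ∈ D(A^β), let φ : ℕ → ℕ be strictly increasing, and let Γ_n, ρ_n > 0 be reals such that ρ_n/Γ_n → 0 and ‖Q_{φ(n)} f‖_{D(A^β)}/Γ_n → 0 as n → ∞. If Γ_n·(A w_{1,n}) + ρ_n·b_{1,n} = −Q_{φ(n)} f holds in D(A^β) for every n ≥ 1, then w_1 = 0. -/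
open Filter

section Aux

variable {H : Type*} [NormedAddCommGroup H] [InnerProductSpace ℝ H]

lemma aux_sobTerm_nonneg (lam : ℕ → ℝ) (e : ℕ → H) (α : ℝ) (u : H)
    (hlam : ∀ j, 1 ≤ lam j) (j : ℕ) : 0 ≤ sobTerm lam e α u j := by
  have h1 : (0:ℝ) < lam j := lt_of_lt_of_le one_pos (hlam j)
  unfold sobTerm
  positivity

/-- coefficient bound: `|⟨u, e j⟩| ≤ ‖u‖_{D(A^α)}` when `lam j ≥ 1` and `α ≥ 0`. -/
lemma aux_coeff_le (lam : ℕ → ℝ) (e : ℕ → H) (α : ℝ) (hα : 0 ≤ α) (u : H)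
    (hu : memDA lam e α u) (hlam : ∀ j, 1 ≤ lam j) (j : ℕ) :
    |@inner ℝ H _ u (e j)| ≤ sobNorm lam e α u := by
  have h1 : (1:ℝ) ≤ lam j ^ (2 * α) :=
    Real.one_le_rpow (hlam j) (by positivity)
  have h2 : (@inner ℝ H _ u (e j)) ^ 2 ≤ sobTerm lam e α u j := by
    unfold sobTerm
    nlinarith [sq_nonneg (@inner ℝ H _ u (e j))]
  have h3 : sobTerm lam e α u j ≤ ∑' i, sobTerm lam e α u i :=
    Summable.le_tsum hu j (fun i _ => aux_sobTerm_nonneg lam e α u hlam i)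
  calc |@inner ℝ H _ u (e j)| = Real.sqrt ((@inner ℝ H _ u (e j)) ^ 2) :=
        (Real.sqrt_sq_eq_abs _).symm
    _ ≤ sobNorm lam e α u := Real.sqrt_le_sqrt (h2.trans h3)

lemma aux_memDA_sub (lam : ℕ → ℝ) (e : ℕ → H) (α : ℝ) (u v : H)
    (hu : memDA lam e α u) (hv : memDA lam e α v) (hlam : ∀ j, 1 ≤ lam j) :
    memDA lam e α (u - v) := by
  refine Summable.of_nonneg_of_le (aux_sobTerm_nonneg lam e α _ hlam)
    (fun j => ?_) ((hu.add hv).mul_left 2)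
  unfold sobTerm
  rw [inner_sub_left]
  have h0 : (0:ℝ) ≤ lam j ^ (2 * α) := by
    have : (0:ℝ) < lam j := lt_of_lt_of_le one_pos (hlam j)
    positivity
  have : (@inner ℝ H _ u (e j) - @inner ℝ H _ v (e j)) ^ 2 ≤
      2 * ((@inner ℝ H _ u (e j)) ^ 2 + (@inner ℝ H _ v (e j)) ^ 2) := by
    nlinarith [sq_nonneg (@inner ℝ H _ u (e j) + @inner ℝ H _ v (e j)),
      sq_nonneg (@inner ℝ H _ u (e j) - @inner ℝ H _ v (e j))]
  calc lam j ^ (2 * α) * (@inner ℝ H _ u (e j) - @inner ℝ H _ v (e j)) ^ 2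
      ≤ lam j ^ (2 * α) * (2 * ((@inner ℝ H _ u (e j)) ^ 2 + (@inner ℝ H _ v (e j)) ^ 2)) :=
        mul_le_mul_of_nonneg_left this h0
    _ = 2 * (lam j ^ (2 * α) * (@inner ℝ H _ u (e j)) ^ 2
          + lam j ^ (2 * α) * (@inner ℝ H _ v (e j)) ^ 2) := by ring

/-- `⟨A u, e j⟩ = λ_j ⟨u, e j⟩` for `u ∈ D(A^{1+β})`. -/
lemma aux_inner_opA (lam : ℕ → ℝ) (e : ℕ → H) [CompleteSpace H]
    (honb : Orthonormal ℝ e) (β : ℝ) (hβ : 0 ≤ β) (u : H)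
    (hu : memDA lam e (1 + β) u) (hlam : ∀ j, 1 ≤ lam j) (j : ℕ) :
    @inner ℝ H _ (opA lam e u) (e j) = lam j * @inner ℝ H _ u (e j) := by
  -- summability of the defining series of `A u`
  have hsum : Summable (fun i => (lam i * @inner ℝ H _ u (e i)) • e i) := by
    have hOF := honb.orthogonalFamily
    rw [show (fun i => (lam i * @inner ℝ H _ u (e i)) • e i) =
        fun i => (LinearIsometry.toSpanSingleton ℝ H (honb.1 i))
          (lam i * @inner ℝ H _ u (e i)) from rfl]
    rw [hOF.summable_iff_norm_sq_summable]
    refine Summable.of_nonneg_of_le (fun i => by positivity) (fun i => ?_) hu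
    have h1 : (0:ℝ) < lam i := lt_of_lt_of_le one_pos (hlam i)
    have hle : lam i ^ 2 ≤ lam i ^ (2 * (1 + β)) := by
      rw [show (lam i)^2 = lam i ^ ((2:ℝ)) by
        rw [← Real.rpow_natCast (lam i) 2]; norm_num]
      exact Real.rpow_le_rpow_of_exponent_le (hlam i) (by linarith)
    unfold sobTerm
    rw [norm_mul, Real.norm_eq_abs, Real.norm_eq_abs, mul_pow, sq_abs, sq_abs]
    exact mul_le_mul_of_nonneg_right hle (sq_nonneg _)
  -- apply `innerSL` to the tsum
  have hmap := (ContinuousLinearMap.map_tsum ((innerSL ℝ).flip (e j)) hsum)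
  have key : @inner ℝ H _ (∑' i, (lam i * @inner ℝ H _ u (e i)) • e i) (e j)
      = ∑' i, lam i * @inner ℝ H _ u (e i) * @inner ℝ H _ (e j) (e i) := by
    rw [real_inner_comm]
    simp at hmap; exact hmap
  unfold opA
  rw [key]
  have hterm : ∀ i, lam i * @inner ℝ H _ u (e i) * @inner ℝ H _ (e j) (e i)
      = if i = j then lam j * @inner ℝ H _ u (e j) else 0 := by
    intro i
    rcases eq_or_ne i j with h | h
    · subst h
      simp [real_inner_self_eq_norm_sq, honb.1 i]
    · simp [honb.2 h.symm, h]
  calc (∑' i, lam i * @inner ℝ H _ u (e i) * @inner ℝ H _ (e j) (e i))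
      = ∑' i, if i = j then lam j * @inner ℝ H _ u (e j) else 0 := tsum_congr hterm
    _ = lam j * @inner ℝ H _ u (e j) := by
        rw [tsum_eq_single j (fun i hi => by simp [hi])]; simp

lemma aux_inner_projQ (e : ℕ → H) (honb : Orthonormal ℝ e) (f : H) {j m : ℕ}
    (hjm : j < m) : @inner ℝ H _ (projQ e m f) (e j) = 0 := by
  unfold projQ projP
  rw [inner_sub_left, sum_inner]
  have : ∀ i ∈ Finset.range m,
      @inner ℝ H _ ((@inner ℝ H _ f (e i)) • e i) (e j)
        = if i = j then @inner ℝ H _ f (e j) else 0 := by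
    intro i _
    rw [inner_smul_left]
    rcases eq_or_ne i j with h | h
    · subst h; simp [real_inner_self_eq_norm_sq, honb.1 i]
    · simp [honb.2 h, h]
  rw [Finset.sum_congr rfl this, Finset.sum_ite_eq' (Finset.range m) j]
  simp [Finset.mem_range.mpr hjm]

end Aux

/-- if `ρ_n/Γ_n → 0` and `‖Q_{φ(n)} f‖_{D(A^β)}/Γ_n → 0`, then `w₁ = 0`
(Case 1(ii) of Theorem 4.4). -/
theorem leading_term_vanishes_w1
    {H : Type*} [NormedAddCommGroup H] [InnerProductSpace ℝ H] [CompleteSpace H]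
    (lam : ℕ → ℝ) (e : ℕ → H) (hbasis : IsEigenBasis lam e)
    (β : ℝ) (hβ : 0 ≤ β)
    (w1 : H) (w1n : ℕ → H) (hw1 : memDA lam e (1 + β) w1)
    (hw1n : ∀ n, memDA lam e (1 + β) (w1n n))
    (hw1conv : Tendsto (fun n => sobNorm lam e (1 + β) (w1n n - w1)) atTop (nhds 0))
    (b1 : H) (b1n : ℕ → H) (hb1 : memDA lam e β b1) (hb1n : ∀ n, memDA lam e β (b1n n))
    (hb1conv : Tendsto (fun n => sobNorm lam e β (b1n n - b1)) atTop (nhds 0))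
    (f : H) (hf : memDA lam e β f)
    (σ : ℕ → ℕ) (hσ : StrictMono σ)
    (Γ ρ : ℕ → ℝ) (hΓ : ∀ n, 0 < Γ n) (hρ : ∀ n, 0 < ρ n)
    (hratio : Tendsto (fun n => ρ n / Γ n) atTop (nhds 0))
    (hQf : Tendsto (fun n => sobNorm lam e β (projQ e (σ n) f) / Γ n) atTop (nhds 0))
    (heq : ∀ n, Γ n • opA lam e (w1n n) + ρ n • b1n n = -projQ e (σ n) f) :
    w1 = 0 := by
  obtain ⟨honb, htotal, hmono, hlam0, _⟩ := hbasis
  have hlam : ∀ j, 1 ≤ lam j := fun j => hlam0.trans (hmono (Nat.zero_le j))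
  have h1β : (0:ℝ) ≤ 1 + β := by linarith
  -- coefficients converge
  have hwcoeff : ∀ j, Tendsto (fun n => @inner ℝ H _ (w1n n) (e j)) atTop
      (nhds (@inner ℝ H _ w1 (e j))) := by
    intro j
    have hb : ∀ n, |@inner ℝ H _ (w1n n) (e j) - @inner ℝ H _ w1 (e j)|
        ≤ sobNorm lam e (1 + β) (w1n n - w1) := by
      intro n
      have := aux_coeff_le lam e (1 + β) h1β (w1n n - w1)
        (aux_memDA_sub lam e (1 + β) _ _ (hw1n n) hw1 hlam) hlam j
      rwa [inner_sub_left] at this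
    have : Tendsto (fun n => @inner ℝ H _ (w1n n) (e j) - @inner ℝ H _ w1 (e j))
        atTop (nhds 0) := by
      refine squeeze_zero_norm (fun n => ?_) hw1conv
      rw [Real.norm_eq_abs]; exact hb n
    have := this.add (tendsto_const_nhds (x := @inner ℝ H _ w1 (e j)))
    simpa using this
  have hbcoeff : ∀ j, Tendsto (fun n => @inner ℝ H _ (b1n n) (e j)) atTop
      (nhds (@inner ℝ H _ b1 (e j))) := by
    intro j
    have hb : ∀ n, |@inner ℝ H _ (b1n n) (e j) - @inner ℝ H _ b1 (e j)|
        ≤ sobNorm lam e β (b1n n - b1) := by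
      intro n
      have := aux_coeff_le lam e β hβ (b1n n - b1)
        (aux_memDA_sub lam e β _ _ (hb1n n) hb1 hlam) hlam j
      rwa [inner_sub_left] at this
    have : Tendsto (fun n => @inner ℝ H _ (b1n n) (e j) - @inner ℝ H _ b1 (e j))
        atTop (nhds 0) := by
      refine squeeze_zero_norm (fun n => ?_) hb1conv
      rw [Real.norm_eq_abs]; exact hb n
    have := this.add (tendsto_const_nhds (x := @inner ℝ H _ b1 (e j)))
    simpa using this
  -- all coefficients of w1 vanish
  have hkey : ∀ j, @inner ℝ H _ w1 (e j) = 0 := by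
    intro j
    -- for n > j, taking the inner product of `heq n` with `e j`
    have hev : ∀ᶠ n in atTop, lam j * @inner ℝ H _ (w1n n) (e j)
        = -((ρ n / Γ n) * @inner ℝ H _ (b1n n) (e j)) := by
      filter_upwards [eventually_gt_atTop j] with n hn
      have hjσ : j < σ n := lt_of_lt_of_le hn (hσ.le_apply)
      have h0 := congrArg (fun v => @inner ℝ H _ v (e j)) (heq n)
      simp only [inner_add_left, inner_smul_left, inner_neg_left,
        RCLike.conj_to_real] at h0
      rw [aux_inner_opA lam e honb β hβ (w1n n) (hw1n n) hlam j,
        aux_inner_projQ e honb f hjσ] at h0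
      have hΓn := (hΓ n).ne'
      field_simp
      nlinarith [h0]
    -- limits
    have hlim1 : Tendsto (fun n => lam j * @inner ℝ H _ (w1n n) (e j)) atTop
        (nhds (lam j * @inner ℝ H _ w1 (e j))) :=
      (hwcoeff j).const_mul (lam j)
    have hlim2 : Tendsto (fun n => -((ρ n / Γ n) * @inner ℝ H _ (b1n n) (e j))) atTop
        (nhds (-(0 * @inner ℝ H _ b1 (e j)))) :=
      ((hratio.mul (hbcoeff j))).neg
    rw [zero_mul, neg_zero] at hlim2
    have : lam j * @inner ℝ H _ w1 (e j) = 0 :=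
      tendsto_nhds_unique (hlim1.congr' hev) hlim2
    have hlampos : (0:ℝ) < lam j := lt_of_lt_of_le one_pos (hlam j)
    exact (mul_eq_zero.mp this).resolve_left hlampos.ne'
  -- totality
  have hmem : w1 ∈ (Submodule.span ℝ (Set.range e))ᗮ := by
    rw [Submodule.mem_orthogonal]
    intro u hu
    induction hu using Submodule.span_induction with
    | mem x hx =>
        obtain ⟨j, rfl⟩ := hx
        rw [real_inner_comm]; exact hkey j
    | zero => simp
    | add x y _ _ hx hy => rw [inner_add_left, hx, hy, add_zero]
    | smul c x _ hx => rw [inner_smul_left, hx, mul_zero]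
  rw [Submodule.topologicalClosure_eq_top_iff] at htotal
  rw [htotal] at hmem
  simpa using hmem
end

section
/- Let σ > 0 and let (v_n)_{n≥1} be a sequence with sup_{n≥1} ‖v_n‖_{D(A^σ)} < ∞. Then for any strictly decreasing sequence (s_k)_{k≥0} of reals in the open interval (0, σ), there is a subsequence of (v_n)_{n≥1} that possesses a strict expansion in the nested family (D(A^{s_k}))_{k≥0}. -/
open Filter

open Filter

set_option linter.unusedSectionVars false
set_option linter.unusedVariables false
set_option linter.unnecessarySimpa false
section FS
variable {H : Type*} [NormedAddCommGroup H] [InnerProductSpace ℝ H]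

namespace SEF

variable {H : Type*} [NormedAddCommGroup H] [InnerProductSpace ℝ H] [CompleteSpace H]
variable {lam : ℕ → ℝ} {e : ℕ → H}

lemma lam_one (hb : IsEigenBasis lam e) (j : ℕ) : 1 ≤ lam j :=
  hb.2.2.2.1.trans (hb.2.2.1 (Nat.zero_le j))

lemma lam_pos (hb : IsEigenBasis lam e) (j : ℕ) : 0 < lam j :=
  lt_of_lt_of_le one_pos (lam_one hb j)

/-- The Hilbert basis from an eigenbasis. -/
noncomputable def HB (hb : IsEigenBasis lam e) : HilbertBasis ℕ ℝ H :=
  HilbertBasis.mk hb.1 (le_of_eq hb.2.1.symm)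

lemma HB_apply (hb : IsEigenBasis lam e) (j : ℕ) : HB hb j = e j := by
  rw [HB, HilbertBasis.coe_mk]

lemma HB_repr (hb : IsEigenBasis lam e) (u : H) (j : ℕ) :
    (HB hb).repr u j = @inner ℝ H _ u (e j) := by
  rw [HilbertBasis.repr_apply_apply, HB_apply, real_inner_comm]

noncomputable def sobSeq (lam : ℕ → ℝ) (e : ℕ → H) (α : ℝ) (u : H) : ℕ → ℝ :=
  fun j => lam j ^ α * @inner ℝ H _ u (e j)

lemma sobTerm_eq_sq (hb : IsEigenBasis lam e) (α : ℝ) (u : H) (j : ℕ) :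
    sobTerm lam e α u j = (sobSeq lam e α u j) ^ 2 := by
  unfold sobTerm sobSeq
  rw [mul_pow, ← Real.rpow_natCast (lam j ^ α) 2, ← Real.rpow_mul (lam_pos hb j).le]
  norm_num [mul_comm α 2]

lemma memDA_iff_memℓp (hb : IsEigenBasis lam e) (α : ℝ) (u : H) :
    memDA lam e α u ↔ Memℓp (sobSeq lam e α u) 2 := by
  rw [memℓp_gen_iff (by norm_num : 0 < (2 : ENNReal).toReal)]
  refine summable_congr fun j => ?_
  rw [sobTerm_eq_sq hb]
  simp [Real.rpow_natCast]

end SEF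

end FS
section
open SEF
variable {H : Type*} [NormedAddCommGroup H] [InnerProductSpace ℝ H] [CompleteSpace H]
variable {lam : ℕ → ℝ} {e : ℕ → H}

namespace SEF

/-- The lp element attached to `u ∈ D(A^α)`. -/
noncomputable def toLp (hb : IsEigenBasis lam e) {α : ℝ} {u : H} (h : memDA lam e α u) :
    lp (fun _ : ℕ => ℝ) 2 :=
  ⟨sobSeq lam e α u, (memDA_iff_memℓp hb α u).1 h⟩

lemma toLp_apply (hb : IsEigenBasis lam e) {α : ℝ} {u : H} (h : memDA lam e α u) (j : ℕ) :
    (toLp hb h : ℕ → ℝ) j = sobSeq lam e α u j := rfl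

lemma sobNorm_eq_lp_norm (hb : IsEigenBasis lam e) {α : ℝ} {u : H} (h : memDA lam e α u) :
    sobNorm lam e α u = ‖toLp hb h‖ := by
  rw [lp.norm_eq_tsum_rpow (by norm_num) (toLp hb h), sobNorm, Real.sqrt_eq_rpow]
  congr 1
  refine tsum_congr fun j => ?_
  rw [sobTerm_eq_sq hb]
  have hc : (toLp hb h : ℕ → ℝ) j = sobSeq lam e α u j := rfl
  rw [hc]
  simp [Real.rpow_natCast]

lemma memDA_zero (lam : ℕ → ℝ) (e : ℕ → H) (α : ℝ) : memDA lam e α (0 : H) := by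
  have : sobTerm lam e α (0 : H) = fun _ => 0 := by
    funext j; simp [sobTerm]
  rw [memDA, this]; exact summable_zero

lemma sobNorm_zero (lam : ℕ → ℝ) (e : ℕ → H) (α : ℝ) : sobNorm lam e α (0 : H) = 0 := by
  have : sobTerm lam e α (0 : H) = fun _ => 0 := by funext j; simp [sobTerm]
  rw [sobNorm, this, tsum_zero, Real.sqrt_zero]

lemma sobSeq_add (α : ℝ) (u v : H) :
    sobSeq lam e α (u + v) = sobSeq lam e α u + sobSeq lam e α v := by
  funext j; simp [sobSeq, inner_add_left, mul_add]

lemma sobSeq_smul (α : ℝ) (c : ℝ) (u : H) :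
    sobSeq lam e α (c • u) = c • sobSeq lam e α u := by
  funext j; simp [sobSeq, real_inner_smul_left]; ring

lemma memDA_add (hb : IsEigenBasis lam e) {α : ℝ} {u v : H}
    (hu : memDA lam e α u) (hv : memDA lam e α v) : memDA lam e α (u + v) := by
  rw [memDA_iff_memℓp hb, sobSeq_add]
  exact ((memDA_iff_memℓp hb α u).1 hu).add ((memDA_iff_memℓp hb α v).1 hv)

lemma memDA_smul (hb : IsEigenBasis lam e) {α : ℝ} (c : ℝ) {u : H}
    (hu : memDA lam e α u) : memDA lam e α (c • u) := by
  rw [memDA_iff_memℓp hb, sobSeq_smul]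
  exact ((memDA_iff_memℓp hb α u).1 hu).const_smul c

lemma memDA_sub (hb : IsEigenBasis lam e) {α : ℝ} {u v : H}
    (hu : memDA lam e α u) (hv : memDA lam e α v) : memDA lam e α (u - v) := by
  have := memDA_add hb hu (memDA_smul hb (-1 : ℝ) hv)
  simpa [sub_eq_add_neg] using this

lemma sobNorm_add_le (hb : IsEigenBasis lam e) {α : ℝ} {u v : H}
    (hu : memDA lam e α u) (hv : memDA lam e α v) :
    sobNorm lam e α (u + v) ≤ sobNorm lam e α u + sobNorm lam e α v := by
  rw [sobNorm_eq_lp_norm hb hu, sobNorm_eq_lp_norm hb hv,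
    sobNorm_eq_lp_norm hb (memDA_add hb hu hv)]
  have : toLp hb (memDA_add hb hu hv) = toLp hb hu + toLp hb hv := by
    apply Subtype.ext
    simp only [toLp, lp.coeFn_add]
    exact sobSeq_add α u v
  rw [this]
  exact norm_add_le _ _

lemma sobNorm_smul (hb : IsEigenBasis lam e) (α : ℝ) (c : ℝ) (u : H) :
    sobNorm lam e α (c • u) = |c| * sobNorm lam e α u := by
  have hterm : ∀ j, sobTerm lam e α (c • u) j = c ^ 2 * sobTerm lam e α u j := by
    intro j; simp [sobTerm, real_inner_smul_left]; ring
  rw [sobNorm, sobNorm, tsum_congr hterm, tsum_mul_left, Real.sqrt_mul (sq_nonneg c),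
    Real.sqrt_sq_eq_abs]

lemma sobNorm_neg (hb : IsEigenBasis lam e) (α : ℝ) (u : H) :
    sobNorm lam e α (-u) = sobNorm lam e α u := by
  have := sobNorm_smul hb α (-1 : ℝ) u
  simpa using this

lemma sobNorm_nonneg (lam : ℕ → ℝ) (e : ℕ → H) (α : ℝ) (u : H) : 0 ≤ sobNorm lam e α u :=
  Real.sqrt_nonneg _

lemma sobNorm_eq_zero_iff (hb : IsEigenBasis lam e) {α : ℝ} {u : H} (h : memDA lam e α u) :
    sobNorm lam e α u = 0 ↔ u = 0 := by
  constructor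
  · intro h0
    have hnn : ∀ j, 0 ≤ sobTerm lam e α u j := by
      intro j
      exact mul_nonneg (Real.rpow_nonneg (lam_pos hb j).le _) (sq_nonneg _)
    have hts : ∑' j, sobTerm lam e α u j = 0 := by
      have := Real.sqrt_eq_zero (tsum_nonneg hnn) |>.1 h0
      exact this
    have hall : ∀ j, sobTerm lam e α u j = 0 := by
      intro j
      have hle := Summable.le_tsum h j (fun i _ => hnn i)
      have := hnn j
      linarith [hts ▸ hle]
    have hinner : ∀ j, @inner ℝ H _ u (e j) = 0 := by
      intro j
      have hj := hall j
      have hpos : 0 < lam j ^ (2 * α) := Real.rpow_pos_of_pos (lam_pos hb j) _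
      have : (@inner ℝ H _ u (e j)) ^ 2 = 0 := by
        rcases mul_eq_zero.1 hj with h' | h'
        · exact absurd h' (ne_of_gt hpos)
        · exact h'
      exact pow_eq_zero_iff (two_ne_zero) |>.1 this
    have hrepr : (HB hb).repr u = 0 := by
      ext j
      rw [HB_repr hb]
      simpa using hinner j
    have := (HB hb).repr.map_eq_zero_iff.1 hrepr
    exact this
  · intro h0; rw [h0]; exact sobNorm_zero lam e α

lemma sobTerm_mono (hb : IsEigenBasis lam e) {α β : ℝ} (hαβ : α ≤ β) (u : H) (j : ℕ) :
    sobTerm lam e α u j ≤ sobTerm lam e β u j := by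
  unfold sobTerm
  exact mul_le_mul_of_nonneg_right
    (Real.rpow_le_rpow_of_exponent_le (lam_one hb j) (by linarith)) (sq_nonneg _)

lemma sobTerm_nonneg (hb : IsEigenBasis lam e) (α : ℝ) (u : H) (j : ℕ) :
    0 ≤ sobTerm lam e α u j :=
  mul_nonneg (Real.rpow_nonneg (lam_pos hb j).le _) (sq_nonneg _)

lemma memDA_mono (hb : IsEigenBasis lam e) {α β : ℝ} (hαβ : α ≤ β) {u : H}
    (h : memDA lam e β u) : memDA lam e α u :=
  Summable.of_nonneg_of_le (fun j => sobTerm_nonneg hb α u j)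
    (fun j => sobTerm_mono hb hαβ u j) h

lemma sobNorm_mono (hb : IsEigenBasis lam e) {α β : ℝ} (hαβ : α ≤ β) {u : H}
    (h : memDA lam e β u) : sobNorm lam e α u ≤ sobNorm lam e β u :=
  Real.sqrt_le_sqrt (Summable.tsum_le_tsum (fun j => sobTerm_mono hb hαβ u j)
    (memDA_mono hb hαβ h) h)

end SEF
end
section
variable {H : Type*} [NormedAddCommGroup H] [InnerProductSpace ℝ H] [CompleteSpace H]
variable {lam : ℕ → ℝ} {e : ℕ → H}

namespace SEF

lemma sobNorm_sub_le (hb : IsEigenBasis lam e) {α : ℝ} {u v : H}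
    (hu : memDA lam e α u) (hv : memDA lam e α v) :
    sobNorm lam e α (u - v) ≤ sobNorm lam e α u + sobNorm lam e α v := by
  have h' := sobNorm_add_le hb hu (memDA_smul hb (-1 : ℝ) hv)
  have h1 : u + (-1 : ℝ) • v = u - v := by
    rw [neg_smul, one_smul, sub_eq_add_neg]
  have h2 : sobNorm lam e α ((-1 : ℝ) • v) = sobNorm lam e α v := by
    rw [sobNorm_smul hb]; simp
  rwa [h1, h2] at h'

lemma sobNorm_sq_eq (lam : ℕ → ℝ) (e : ℕ → H) (α : ℝ) (u : H)
    (hnn : ∀ j, 0 ≤ sobTerm lam e α u j) :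
    sobNorm lam e α u ^ 2 = ∑' j, sobTerm lam e α u j := by
  rw [sobNorm, Real.sq_sqrt (tsum_nonneg hnn)]

/-- Compact embedding `D(A^r) ↪ D(A^t)` for `0 ≤ t < r`. -/
lemma compact_embed (hb : IsEigenBasis lam e) {t r : ℝ} (ht : 0 ≤ t) (htr : t < r)
    (u : ℕ → H) (hu : ∀ n, memDA lam e r (u n)) {M : ℝ}
    (hM : ∀ n, sobNorm lam e r (u n) ≤ M) :
    ∃ ψ : ℕ → ℕ, StrictMono ψ ∧ ∃ x, memDA lam e t x ∧ memDA lam e r x ∧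
      Tendsto (fun n => sobNorm lam e t (u (ψ n) - x)) atTop (nhds 0) := by
  have hr0 : (0:ℝ) ≤ r := le_trans ht htr.le
  have hM0 : 0 ≤ M := le_trans (sobNorm_nonneg lam e r (u 0)) (hM 0)
  have htsum : ∀ n, ∑' j, sobTerm lam e r (u n) j ≤ M ^ 2 := by
    intro n
    have h1 : sobNorm lam e r (u n) ^ 2 ≤ M ^ 2 :=
      pow_le_pow_left₀ (sobNorm_nonneg lam e r (u n)) (hM n) 2
    rwa [sobNorm_sq_eq lam e r (u n) (fun j => sobTerm_nonneg hb r (u n) j)] at h1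
  have hterm_le : ∀ n j, sobTerm lam e r (u n) j ≤ M ^ 2 := fun n j =>
    le_trans (Summable.le_tsum (hu n) j fun i _ => sobTerm_nonneg hb r (u n) i) (htsum n)
  have hcoefsq : ∀ n j, (@inner ℝ H _ (u n) (e j)) ^ 2 ≤ M ^ 2 := by
    intro n j
    have h2 : 1 ≤ lam j ^ (2 * r) := Real.one_le_rpow (lam_one hb j) (by linarith)
    have h3 := hterm_le n j
    rw [sobTerm] at h3
    nlinarith [sq_nonneg (@inner ℝ H _ (u n) (e j))]
  have hcoef : ∀ n, (fun j => @inner ℝ H _ (u n) (e j)) ∈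
      Set.univ.pi fun _ : ℕ => Set.Icc (-M) M := by
    intro n j _
    constructor
    · nlinarith [hcoefsq n j]
    · nlinarith [hcoefsq n j]
  have hcpt : IsCompact (Set.univ.pi fun _ : ℕ => Set.Icc (-M) M) :=
    isCompact_univ_pi fun _ => isCompact_Icc
  obtain ⟨b, -, ψ, hψ, hconv⟩ := hcpt.tendsto_subseq hcoef
  have hptwise : ∀ j, Tendsto (fun n => @inner ℝ H _ (u (ψ n)) (e j)) atTop (nhds (b j)) :=
    fun j => (tendsto_pi_nhds.1 hconv) j
  -- partial-sum bound for the limit coefficients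
  have hbsum : ∀ F : Finset ℕ, ∑ j ∈ F, lam j ^ (2 * r) * (b j) ^ 2 ≤ M ^ 2 := by
    intro F
    have hlim : Tendsto (fun n => ∑ j ∈ F, lam j ^ (2 * r) * (@inner ℝ H _ (u (ψ n)) (e j)) ^ 2)
        atTop (nhds (∑ j ∈ F, lam j ^ (2 * r) * (b j) ^ 2)) := by
      refine tendsto_finset_sum F fun j _ => ?_
      exact ((hptwise j).pow 2).const_mul _
    refine le_of_tendsto hlim (Eventually.of_forall fun n => ?_)
    calc ∑ j ∈ F, lam j ^ (2 * r) * (@inner ℝ H _ (u (ψ n)) (e j)) ^ 2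
        = ∑ j ∈ F, sobTerm lam e r (u (ψ n)) j := by rfl
      _ ≤ ∑' j, sobTerm lam e r (u (ψ n)) j :=
          Summable.sum_le_tsum F (fun i _ => sobTerm_nonneg hb r (u (ψ n)) i) (hu (ψ n))
      _ ≤ M ^ 2 := htsum (ψ n)
  have hbnn : ∀ j, 0 ≤ lam j ^ (2 * r) * (b j) ^ 2 := fun j =>
    mul_nonneg (Real.rpow_nonneg (lam_pos hb j).le _) (sq_nonneg _)
  have hbr : Summable (fun j => lam j ^ (2 * r) * (b j) ^ 2) :=
    summable_of_sum_le hbnn hbsum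
  have hb2 : Memℓp b 2 := by
    apply memℓp_gen
    have heq : ∀ j, ‖b j‖ ^ (2 : ENNReal).toReal = (b j) ^ 2 := by
      intro j; simp [Real.rpow_natCast]
    rw [summable_congr heq]
    refine Summable.of_nonneg_of_le (fun j => sq_nonneg _) (fun j => ?_) hbr
    have h2 : 1 ≤ lam j ^ (2 * r) := Real.one_le_rpow (lam_one hb j) (by linarith)
    nlinarith [sq_nonneg (b j)]
  set x := (HB hb).repr.symm ⟨b, hb2⟩ with hxdef
  have hxcoef : ∀ j, @inner ℝ H _ x (e j) = b j := by
    intro j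
    rw [← HB_repr hb]
    have hx : (HB hb).repr x = ⟨b, hb2⟩ := (HB hb).repr.apply_symm_apply _
    rw [hx]
  have hxterm : ∀ α : ℝ, sobTerm lam e α x = fun j => lam j ^ (2 * α) * (b j) ^ 2 := by
    intro α; funext j; rw [sobTerm, hxcoef]
  have hxr : memDA lam e r x := by rw [memDA, hxterm]; exact hbr
  have hxrsum : ∑' j, sobTerm lam e r x j ≤ M ^ 2 := by
    rw [hxterm]; exact Summable.tsum_le_of_sum_le hbr hbsum
  have hxt : memDA lam e t x := memDA_mono hb htr.le hxr
  refine ⟨ψ, hψ, x, hxt, hxr, ?_⟩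
  -- the difference sequence
  have hdr : ∀ n, memDA lam e r (u (ψ n) - x) := fun n => memDA_sub hb (hu (ψ n)) hxr
  have hdt : ∀ n, memDA lam e t (u (ψ n) - x) := fun n => memDA_mono hb htr.le (hdr n)
  have hxnorm : sobNorm lam e r x ≤ M := by
    rw [sobNorm]
    calc Real.sqrt (∑' j, sobTerm lam e r x j) ≤ Real.sqrt (M ^ 2) :=
          Real.sqrt_le_sqrt hxrsum
      _ = M := Real.sqrt_sq hM0
  have hdsum : ∀ n, ∑' j, sobTerm lam e r (u (ψ n) - x) j ≤ (M + M) ^ 2 := by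
    intro n
    have h1 : sobNorm lam e r (u (ψ n) - x) ≤ M + M :=
      le_trans (sobNorm_sub_le hb (hu (ψ n)) hxr) (add_le_add (hM (ψ n)) hxnorm)
    have h2 : sobNorm lam e r (u (ψ n) - x) ^ 2 ≤ (M + M) ^ 2 :=
      pow_le_pow_left₀ (sobNorm_nonneg _ _ _ _) h1 2
    rwa [sobNorm_sq_eq lam e r _ (fun j => sobTerm_nonneg hb r _ j)] at h2
  have hdcoef : ∀ n j, @inner ℝ H _ (u (ψ n) - x) (e j)
      = @inner ℝ H _ (u (ψ n)) (e j) - b j := by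
    intro n j; rw [inner_sub_left, hxcoef]
  -- key convergence of the squares
  have hkey : Tendsto (fun n => ∑' j, sobTerm lam e t (u (ψ n) - x) j) atTop (nhds 0) := by
    rw [Metric.tendsto_atTop]
    intro ε hε
    -- choose the tail cutoff
    have hexp : Tendsto (fun j => lam j ^ (2 * (t - r))) atTop (nhds 0) := by
      have h1 : Tendsto (fun y : ℝ => y ^ (-(2 * (r - t)))) atTop (nhds 0) :=
        tendsto_rpow_neg_atTop (by linarith)
      have h2 := h1.comp hb.2.2.2.2
      have h3 : (fun j => lam j ^ (-(2 * (r - t)))) = fun j => lam j ^ (2 * (t - r)) := by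
        funext j; ring_nf
      rw [← h3]
      exact h2
    obtain ⟨J, hJ⟩ := (Metric.tendsto_atTop.1 hexp (ε / 2 / ((M + M) ^ 2 + 1))
      (by positivity))
    have hJ' : lam J ^ (2 * (t - r)) < ε / 2 / ((M + M) ^ 2 + 1) := by
      have := hJ J le_rfl
      rw [Real.dist_eq, sub_zero, abs_of_nonneg (Real.rpow_nonneg (lam_pos hb J).le _)] at this
      exact this
    set cJ := lam J ^ (2 * (t - r)) with hcJ
    have hcJ0 : 0 ≤ cJ := Real.rpow_nonneg (lam_pos hb J).le _
    -- tail bound, uniform in n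
    have htail : ∀ n, ∑' j, sobTerm lam e t (u (ψ n) - x) (j + J) ≤ cJ * (M + M) ^ 2 := by
      intro n
      have hptle : ∀ j, sobTerm lam e t (u (ψ n) - x) (j + J)
          ≤ cJ * sobTerm lam e r (u (ψ n) - x) (j + J) := by
        intro j
        rw [sobTerm, sobTerm, ← mul_assoc]
        refine mul_le_mul_of_nonneg_right ?_ (sq_nonneg _)
        have hsplit : lam (j + J) ^ (2 * t)
            = lam (j + J) ^ (2 * (t - r)) * lam (j + J) ^ (2 * r) := by
          rw [← Real.rpow_add (lam_pos hb (j + J)), show 2 * (t - r) + 2 * r = 2 * t by ring]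
        rw [hsplit]
        refine mul_le_mul_of_nonneg_right ?_ (Real.rpow_nonneg (lam_pos hb _).le _)
        exact Real.rpow_le_rpow_of_nonpos (lam_pos hb J)
          (hb.2.2.1 (Nat.le_add_left J j)) (by linarith)
      have hsum1 : Summable (fun j => sobTerm lam e t (u (ψ n) - x) (j + J)) :=
        (summable_nat_add_iff J).2 (hdt n)
      have hsum2 : Summable (fun j => cJ * sobTerm lam e r (u (ψ n) - x) (j + J)) :=
        ((summable_nat_add_iff J).2 (hdr n)).mul_left cJ
      calc ∑' j, sobTerm lam e t (u (ψ n) - x) (j + J)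
          ≤ ∑' j, cJ * sobTerm lam e r (u (ψ n) - x) (j + J) :=
            Summable.tsum_le_tsum hptle hsum1 hsum2
        _ = cJ * ∑' j, sobTerm lam e r (u (ψ n) - x) (j + J) := tsum_mul_left
        _ ≤ cJ * (M + M) ^ 2 := by
            refine mul_le_mul_of_nonneg_left ?_ hcJ0
            have hsplit := (Summable.sum_add_tsum_nat_add J (hdr n)).symm
            have hhead0 : 0 ≤ ∑ j ∈ Finset.range J, sobTerm lam e r (u (ψ n) - x) j :=
              Finset.sum_nonneg fun j _ => sobTerm_nonneg hb r _ j
            have := hdsum n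
            linarith [hsplit]
    have htailε : ∀ n, ∑' j, sobTerm lam e t (u (ψ n) - x) (j + J) < ε / 2 := by
      intro n
      refine lt_of_le_of_lt (htail n) ?_
      calc cJ * (M + M) ^ 2 ≤ cJ * ((M + M) ^ 2 + 1) := by nlinarith
        _ < ε / 2 / ((M + M) ^ 2 + 1) * ((M + M) ^ 2 + 1) := by
            refine mul_lt_mul_of_pos_right hJ' (by positivity)
        _ = ε / 2 := by field_simp
    -- head convergence
    have hhead : Tendsto (fun n => ∑ j ∈ Finset.range J, sobTerm lam e t (u (ψ n) - x) j)
        atTop (nhds 0) := by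
      have hterm : ∀ j, Tendsto (fun n => sobTerm lam e t (u (ψ n) - x) j) atTop (nhds 0) := by
        intro j
        have h1 : Tendsto (fun n => @inner ℝ H _ (u (ψ n)) (e j) - b j) atTop (nhds 0) := by
          have := (hptwise j).sub_const (b j)
          simpa using this
        have h2 : Tendsto (fun n => lam j ^ (2 * t) * (@inner ℝ H _ (u (ψ n)) (e j) - b j) ^ 2)
            atTop (nhds 0) := by
          have := ((h1.pow 2).const_mul (lam j ^ (2 * t)))
          simpa using this
        refine h2.congr fun n => ?_
        rw [sobTerm, hdcoef]
      have := tendsto_finset_sum (Finset.range J) (fun j _ => hterm j)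
      simpa using this
    obtain ⟨N, hN⟩ := (Metric.tendsto_atTop.1 hhead (ε / 2) (by linarith))
    refine ⟨N, fun n hn => ?_⟩
    have hsplit := (Summable.sum_add_tsum_nat_add J (hdt n)).symm
    have hheadlt : ∑ j ∈ Finset.range J, sobTerm lam e t (u (ψ n) - x) j < ε / 2 := by
      have := hN n hn
      rw [Real.dist_eq, sub_zero] at this
      exact lt_of_le_of_lt (le_abs_self _) this
    have htotal : ∑' j, sobTerm lam e t (u (ψ n) - x) j < ε := by
      have := htailε n
      linarith [hsplit]
    rw [Real.dist_eq, sub_zero]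
    rw [abs_of_nonneg (tsum_nonneg fun j => sobTerm_nonneg hb t _ j)]
    exact htotal
  have hfin := (Real.continuous_sqrt.tendsto 0).comp hkey
  simpa [sobNorm, Real.sqrt_zero, Function.comp_def] using hfin

end SEF
end
namespace SEF

section Abstract
variable {E : Type*} [AddCommGroup E] [Module ℝ E]

/-- Hypotheses on the nested family used in the extraction argument. -/
structure NF (Z : ℕ → Set E) (nrm : ℕ → E → ℝ) : Prop where
  zero : ∀ k, (0 : E) ∈ Z k
  add : ∀ k, ∀ x ∈ Z k, ∀ y ∈ Z k, x + y ∈ Z k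
  smul : ∀ (k : ℕ) (c : ℝ), ∀ x ∈ Z k, c • x ∈ Z k
  nonneg : ∀ k, ∀ x ∈ Z k, 0 ≤ nrm k x
  eq0 : ∀ k, ∀ x ∈ Z k, (nrm k x = 0 ↔ x = 0)
  hom : ∀ (k : ℕ) (c : ℝ), ∀ x ∈ Z k, nrm k (c • x) = |c| * nrm k x
  incl : ∀ k, Z k ⊆ Z (k + 1)

variable {Z : ℕ → Set E} {nrm : ℕ → E → ℝ}

lemma NF.sub (h : NF Z nrm) (k : ℕ) {x y : E} (hx : x ∈ Z k) (hy : y ∈ Z k) :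
    x - y ∈ Z k := by
  have := h.add k x hx ((-1 : ℝ) • y) (h.smul k (-1) y hy)
  simpa [sub_eq_add_neg] using this

lemma NF.incl_le (h : NF Z nrm) {j k : ℕ} (hjk : j ≤ k) : Z j ⊆ Z k := by
  induction k with
  | zero => simpa [Nat.le_zero.1 hjk] using subset_rfl
  | succ k ih =>
      rcases Nat.lt_or_ge j (k+1) with h' | h'
      · exact (ih (Nat.lt_succ_iff.1 h')).trans (h.incl k)
      · have : j = k + 1 := le_antisymm hjk h'
        simp [this]

lemma NF.norm_smul_cancel (h : NF Z nrm) (k : ℕ) {x : E} (hx : x ∈ Z k) :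
    nrm k x • ((nrm k x)⁻¹ • x) = x := by
  by_cases h0 : nrm k x = 0
  · have : x = 0 := (h.eq0 k x hx).1 h0
    simp [this]
  · rw [smul_smul, mul_inv_cancel₀ h0, one_smul]

lemma NF.norm_pos (h : NF Z nrm) (k : ℕ) {x : E} (hx : x ∈ Z k) (hne : x ≠ 0) :
    0 < nrm k x :=
  lt_of_le_of_ne (h.nonneg k x hx) (fun h0 => hne ((h.eq0 k x hx).1 h0.symm))

/-- The recursive construction of `(Γ_{K+1}, w_{K+1,·})` (internal level `K`
corresponds to the paper's index `k = K+1`). -/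
noncomputable def stG (nrm : ℕ → E → ℝ) (v : ℕ → E) (c : E) (w : ℕ → E) : ℕ → ℕ → ℝ × E
  | 0, n => (nrm 0 (v n - c), (nrm 0 (v n - c))⁻¹ • (v n - c))
  | (K + 1), n =>
    ((stG nrm v c w K n).1 * nrm (K + 1) ((stG nrm v c w K n).2 - w (K + 1)),
      (nrm (K + 1) ((stG nrm v c w K n).2 - w (K + 1)))⁻¹ •
        ((stG nrm v c w K n).2 - w (K + 1)))

lemma stG_congr (nrm : ℕ → E → ℝ) (v : ℕ → E) (c : E) {w w' : ℕ → E} (K : ℕ)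
    (hww' : ∀ j, 1 ≤ j → j ≤ K → w j = w' j) (n : ℕ) :
    stG nrm v c w K n = stG nrm v c w' K n := by
  induction K with
  | zero => rfl
  | succ K ih =>
      have h1 : stG nrm v c w K n = stG nrm v c w' K n :=
        ih fun j hj hjK => hww' j hj (hjK.trans (Nat.le_succ K))
      simp only [stG, h1, hww' (K+1) (Nat.succ_le_succ (Nat.zero_le K)) le_rfl]

variable {v : ℕ → E} {c : E} {w : ℕ → E}

lemma stG_mem (hNF : NF Z nrm) (hv : ∀ n, v n ∈ Z 0) (hc : c ∈ Z 0) (K : ℕ)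
    (hw : ∀ j, 1 ≤ j → j ≤ K → w j ∈ Z j) (n : ℕ) :
    (stG nrm v c w K n).2 ∈ Z K := by
  induction K with
  | zero =>
      exact hNF.smul 0 _ _ (hNF.sub 0 (hv n) hc)
  | succ K ih =>
      have hx : (stG nrm v c w K n).2 ∈ Z K :=
        ih fun j hj hjK => hw j hj (hjK.trans (Nat.le_succ K))
      have hr : (stG nrm v c w K n).2 - w (K + 1) ∈ Z (K + 1) :=
        hNF.sub (K+1) (hNF.incl K hx) (hw (K+1) (Nat.succ_le_succ (Nat.zero_le K)) le_rfl)
      exact hNF.smul (K+1) _ _ hr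

lemma stG_fst_nonneg (hNF : NF Z nrm) (hv : ∀ n, v n ∈ Z 0) (hc : c ∈ Z 0) (K : ℕ)
    (hw : ∀ j, 1 ≤ j → j ≤ K → w j ∈ Z j) (n : ℕ) :
    0 ≤ (stG nrm v c w K n).1 := by
  induction K with
  | zero => exact hNF.nonneg 0 _ (hNF.sub 0 (hv n) hc)
  | succ K ih =>
      have h1 : 0 ≤ (stG nrm v c w K n).1 :=
        ih fun j hj hjK => hw j hj (hjK.trans (Nat.le_succ K))
      have hx : (stG nrm v c w K n).2 ∈ Z K :=
        stG_mem hNF hv hc K (fun j hj hjK => hw j hj (hjK.trans (Nat.le_succ K))) n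
      have hr : (stG nrm v c w K n).2 - w (K + 1) ∈ Z (K + 1) :=
        hNF.sub (K+1) (hNF.incl K hx) (hw (K+1) (Nat.succ_le_succ (Nat.zero_le K)) le_rfl)
      exact mul_nonneg h1 (hNF.nonneg (K+1) _ hr)

lemma stG_fst_pos_of_succ (hNF : NF Z nrm) (hv : ∀ n, v n ∈ Z 0) (hc : c ∈ Z 0) (K : ℕ)
    (hw : ∀ j, 1 ≤ j → j ≤ K + 1 → w j ∈ Z j) (n : ℕ)
    (hpos : 0 < (stG nrm v c w (K + 1) n).1) : 0 < (stG nrm v c w K n).1 := by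
  have h1 : 0 ≤ (stG nrm v c w K n).1 :=
    stG_fst_nonneg hNF hv hc K (fun j hj hjK => hw j hj (hjK.trans (Nat.le_succ K))) n
  rcases lt_or_eq_of_le h1 with h | h
  · exact h
  · exfalso
    have : (stG nrm v c w (K+1) n).1 = 0 := by
      show (stG nrm v c w K n).1 * _ = 0
      rw [← h, zero_mul]
    rw [this] at hpos; exact lt_irrefl 0 hpos

lemma stG_fst_pos_le (hNF : NF Z nrm) (hv : ∀ n, v n ∈ Z 0) (hc : c ∈ Z 0) {J K : ℕ} (hJK : J ≤ K)
    (hw : ∀ j, 1 ≤ j → j ≤ K → w j ∈ Z j) (n : ℕ)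
    (hpos : 0 < (stG nrm v c w K n).1) : 0 < (stG nrm v c w J n).1 := by
  induction K with
  | zero => simpa [Nat.le_zero.1 hJK] using hpos
  | succ K ih =>
      rcases Nat.lt_or_ge J (K+1) with h' | h'
      · exact ih (Nat.lt_succ_iff.1 h')
          (fun j hj hjK => hw j hj (hjK.trans (Nat.le_succ K)))
          (stG_fst_pos_of_succ hNF hv hc K hw n hpos)
      · have : J = K + 1 := le_antisymm hJK h'
        simpa [this] using hpos

lemma stG_unit (hNF : NF Z nrm) (hv : ∀ n, v n ∈ Z 0) (hc : c ∈ Z 0) (K : ℕ)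
    (hw : ∀ j, 1 ≤ j → j ≤ K → w j ∈ Z j) (n : ℕ)
    (hpos : 0 < (stG nrm v c w K n).1) : nrm K ((stG nrm v c w K n).2) = 1 := by
  cases K with
  | zero =>
      have hmem : v n - c ∈ Z 0 := hNF.sub 0 (hv n) hc
      have hpos' : 0 < nrm 0 (v n - c) := hpos
      show nrm 0 ((nrm 0 (v n - c))⁻¹ • (v n - c)) = 1
      rw [hNF.hom 0 _ _ hmem, abs_of_pos (inv_pos.2 hpos'), inv_mul_cancel₀ (ne_of_gt hpos')]
  | succ K =>
      have hx : (stG nrm v c w K n).2 ∈ Z K :=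
        stG_mem hNF hv hc K (fun j hj hjK => hw j hj (hjK.trans (Nat.le_succ K))) n
      have hr : (stG nrm v c w K n).2 - w (K + 1) ∈ Z (K + 1) :=
        hNF.sub (K+1) (hNF.incl K hx) (hw (K+1) (Nat.succ_le_succ (Nat.zero_le K)) le_rfl)
      have h1 : 0 ≤ (stG nrm v c w K n).1 :=
        stG_fst_nonneg hNF hv hc K (fun j hj hjK => hw j hj (hjK.trans (Nat.le_succ K))) n
      have hnrm_pos : 0 < nrm (K+1) ((stG nrm v c w K n).2 - w (K + 1)) := by
        rcases lt_or_eq_of_le (hNF.nonneg (K+1) _ hr) with h | h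
        · exact h
        · exfalso
          have : (stG nrm v c w (K+1) n).1 = 0 := by
            show (stG nrm v c w K n).1 * _ = 0
            rw [← h, mul_zero]
          rw [this] at hpos; exact lt_irrefl 0 hpos
      show nrm (K+1) ((nrm (K + 1) ((stG nrm v c w K n).2 - w (K + 1)))⁻¹ •
        ((stG nrm v c w K n).2 - w (K + 1))) = 1
      rw [hNF.hom (K+1) _ _ hr, abs_of_pos (inv_pos.2 hnrm_pos),
        inv_mul_cancel₀ (ne_of_gt hnrm_pos)]

/-- The fundamental expansion identity, valid for all `n`. -/
lemma stG_identity (hNF : NF Z nrm) (hv : ∀ n, v n ∈ Z 0) (hc : c ∈ Z 0) (K : ℕ)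
    (hw : ∀ j, 1 ≤ j → j ≤ K → w j ∈ Z j) (n : ℕ) :
    v n = c + (∑ j ∈ Finset.Icc 1 K, (stG nrm v c w (j - 1) n).1 • w j)
      + (stG nrm v c w K n).1 • (stG nrm v c w K n).2 := by
  induction K with
  | zero =>
      have hmem : v n - c ∈ Z 0 := hNF.sub 0 (hv n) hc
      show v n = c + (∑ j ∈ Finset.Icc 1 0, (stG nrm v c w (j - 1) n).1 • w j)
        + nrm 0 (v n - c) • ((nrm 0 (v n - c))⁻¹ • (v n - c))
      rw [hNF.norm_smul_cancel 0 hmem]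
      simp
  | succ K ih =>
      have hw' : ∀ j, 1 ≤ j → j ≤ K → w j ∈ Z j :=
        fun j hj hjK => hw j hj (hjK.trans (Nat.le_succ K))
      have hIH := ih hw'
      have hx : (stG nrm v c w K n).2 ∈ Z K := stG_mem hNF hv hc K hw' n
      have hr : (stG nrm v c w K n).2 - w (K + 1) ∈ Z (K + 1) :=
        hNF.sub (K+1) (hNF.incl K hx) (hw (K+1) (Nat.succ_le_succ (Nat.zero_le K)) le_rfl)
      have hcancel : (stG nrm v c w (K+1) n).1 • (stG nrm v c w (K+1) n).2
          = (stG nrm v c w K n).1 • ((stG nrm v c w K n).2 - w (K + 1)) := by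
        show ((stG nrm v c w K n).1 * nrm (K + 1) ((stG nrm v c w K n).2 - w (K + 1))) •
            ((nrm (K + 1) ((stG nrm v c w K n).2 - w (K + 1)))⁻¹ •
              ((stG nrm v c w K n).2 - w (K + 1))) = _
        rw [mul_smul, hNF.norm_smul_cancel (K+1) hr]
      have hsum : ∑ j ∈ Finset.Icc 1 (K+1), (stG nrm v c w (j - 1) n).1 • w j
          = (∑ j ∈ Finset.Icc 1 K, (stG nrm v c w (j - 1) n).1 • w j)
            + (stG nrm v c w K n).1 • w (K + 1) := by
        rw [Finset.sum_Icc_succ_top (Nat.succ_le_succ (Nat.zero_le K))]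
        simp
      rw [hsum, hcancel]
      rw [smul_sub]
      rw [hIH]
      abel

end Abstract
end SEF
namespace SEF
section Abstract2
open Filter
variable {E : Type*} [AddCommGroup E] [Module ℝ E]
variable {Z : ℕ → Set E} {nrm : ℕ → E → ℝ}

/-- The `k`-th remainder. -/
noncomputable def Rm (nrm : ℕ → E → ℝ) (v : ℕ → E) (c : E) (w : ℕ → E) : ℕ → ℕ → E
  | 0, n => v n - c
  | (K + 1), n => (stG nrm v c w K n).2 - w (K + 1)

/-- The invariant carried through the successive extractions. -/
def Good (Z : ℕ → Set E) (nrm : ℕ → E → ℝ) (v : ℕ → E) (c : E)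
    (k : ℕ) (φ : ℕ → ℕ) (w : ℕ → E) : Prop :=
  StrictMono φ ∧ Tendsto (fun m => nrm 0 (v (φ m) - c)) atTop (nhds 0) ∧
    (∀ j, 1 ≤ j → j ≤ k → w j ∈ Z j) ∧
    (∀ j, 1 ≤ j → j ≤ k → ∀ m, 0 < (stG nrm v c w (j - 1) (φ m)).1) ∧
    (∀ j, 1 ≤ j → j ≤ k →
      Tendsto (fun m => nrm j ((stG nrm v c w (j - 1) (φ m)).2 - w j)) atTop (nhds 0))

lemma Good_comp {v : ℕ → E} {c : E} {k : ℕ} {φ φ' : ℕ → ℕ} {w : ℕ → E}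
    (hg : Good Z nrm v c k φ w) (hφ' : StrictMono φ') :
    Good Z nrm v c k (φ ∘ φ') w := by
  obtain ⟨h1, h2, h3, h4, h5⟩ := hg
  exact ⟨h1.comp hφ', h2.comp hφ'.tendsto_atTop, h3,
    fun j hj hjk m => h4 j hj hjk (φ' m),
    fun j hj hjk => (h5 j hj hjk).comp hφ'.tendsto_atTop⟩

lemma Rm_mem (hNF : NF Z nrm) {v : ℕ → E} {c : E} {w : ℕ → E}
    (hv : ∀ n, v n ∈ Z 0) (hc : c ∈ Z 0) (k : ℕ)
    (hw : ∀ j, 1 ≤ j → j ≤ k → w j ∈ Z j) (n : ℕ) : Rm nrm v c w k n ∈ Z k := by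
  cases k with
  | zero => exact hNF.sub 0 (hv n) hc
  | succ K =>
      have hx : (stG nrm v c w K n).2 ∈ Z K :=
        stG_mem hNF hv hc K (fun j hj hjK => hw j hj (hjK.trans (Nat.le_succ K))) n
      exact hNF.sub (K+1) (hNF.incl K hx) (hw (K+1) (Nat.succ_le_succ (Nat.zero_le K)) le_rfl)

/-- If the `k`-th remainder is nonzero at `n` (and `Γ_k > 0` when `k ≥ 1`), then
`Γ_{k+1}(n) > 0`; moreover `(stG k n).2` is the normalized remainder. -/
lemma stG_fst_pos_succ_level (hNF : NF Z nrm) {v : ℕ → E} {c : E} {w : ℕ → E}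
    (hv : ∀ n, v n ∈ Z 0) (hc : c ∈ Z 0) (k : ℕ)
    (hw : ∀ j, 1 ≤ j → j ≤ k → w j ∈ Z j) (n : ℕ)
    (hprev : k = 0 ∨ 0 < (stG nrm v c w (k - 1) n).1)
    (hne : Rm nrm v c w k n ≠ 0) : 0 < (stG nrm v c w k n).1 := by
  cases k with
  | zero =>
      exact hNF.norm_pos 0 (hNF.sub 0 (hv n) hc) hne
  | succ K =>
      have hprev' : 0 < (stG nrm v c w K n).1 := by
        rcases hprev with h | h
        · exact absurd h (Nat.succ_ne_zero K)
        · simpa using h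
      have hrm : Rm nrm v c w (K + 1) n ∈ Z (K + 1) := Rm_mem hNF hv hc (K + 1) hw n
      have hnp : 0 < nrm (K + 1) (Rm nrm v c w (K + 1) n) := hNF.norm_pos (K + 1) hrm hne
      show 0 < (stG nrm v c w K n).1 * nrm (K + 1) ((stG nrm v c w K n).2 - w (K + 1))
      exact mul_pos hprev' hnp

/-- One extraction step: if the `k`-th remainder is eventually nonzero along the
current subsequence, the invariant can be extended to level `k+1`. -/
lemma Good_step (hNF : NF Z nrm)
    (hcpt : ∀ (k : ℕ) (u : ℕ → E), (∀ n, u n ∈ Z k) → (∀ n, nrm k (u n) ≤ 1) →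
      ∃ ψ : ℕ → ℕ, StrictMono ψ ∧
        ∃ x ∈ Z (k + 1), Tendsto (fun n => nrm (k + 1) (u (ψ n) - x)) atTop (nhds 0))
    {v : ℕ → E} {c : E} (hv : ∀ n, v n ∈ Z 0) (hc : c ∈ Z 0)
    {k : ℕ} {φ : ℕ → ℕ} {w : ℕ → E} (hg : Good Z nrm v c k φ w)
    (hnt : ∀ᶠ m in atTop, Rm nrm v c w k (φ m) ≠ 0) :
    ∃ (ψ : ℕ → ℕ) (x : E), StrictMono ψ ∧
      Good Z nrm v c (k + 1) (φ ∘ ψ) (Function.update w (k + 1) x) ∧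
      (∀ j, j ≤ k → Function.update w (k + 1) x j = w j) := by
  obtain ⟨hφ, hbase, hwmem, hpos, htend⟩ := hg
  obtain ⟨N, hN⟩ := eventually_atTop.1 hnt
  -- the shifted subsequence along which the remainder never vanishes
  have haddN : StrictMono (fun m : ℕ => m + N) := fun a b h => Nat.add_lt_add_right h N
  -- positivity of Γ_{k+1} along the shifted subsequence
  have hpos1 : ∀ m, 0 < (stG nrm v c w k (φ (m + N))).1 := by
    intro m
    refine stG_fst_pos_succ_level hNF hv hc k hwmem (φ (m + N)) ?_ (hN (m + N) (Nat.le_add_left N m))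
    cases k with
    | zero => exact Or.inl rfl
    | succ K =>
        exact Or.inr (hpos (K + 1) (Nat.succ_le_succ (Nat.zero_le K)) le_rfl (m + N))
  -- the normalized remainders form a unit-norm sequence in `Z k`
  set u : ℕ → E := fun m => (stG nrm v c w k (φ (m + N))).2 with hu
  have humem : ∀ m, u m ∈ Z k := fun m => stG_mem hNF hv hc k hwmem (φ (m + N))
  have hunorm : ∀ m, nrm k (u m) ≤ 1 := by
    intro m
    rw [stG_unit hNF hv hc k hwmem (φ (m + N)) (hpos1 m)]
  obtain ⟨ψ2, hψ2, x, hxmem, hxconv⟩ := hcpt k u humem hunorm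
  refine ⟨fun m => ψ2 m + N, x, ?_, ?_, ?_⟩
  · exact haddN.comp hψ2
  · -- the new invariant
    set w' := Function.update w (k + 1) x with hw'
    have hagree : ∀ j, 1 ≤ j → j ≤ k → w' j = w j := by
      intro j _ hjk
      exact Function.update_of_ne (show j ≠ k + 1 by omega) x w
    have hstGeq : ∀ (J : ℕ), J ≤ k → ∀ n, stG nrm v c w' J n = stG nrm v c w J n := by
      intro J hJ n
      exact stG_congr nrm v c J (fun j hj hjJ => hagree j hj (hjJ.trans hJ)) n
    have hφ' : StrictMono (φ ∘ fun m => ψ2 m + N) := hφ.comp (haddN.comp hψ2)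
    refine ⟨hφ', hbase.comp (haddN.comp hψ2).tendsto_atTop, ?_, ?_, ?_⟩
    · intro j hj hjk1
      rcases Nat.lt_or_ge j (k + 1) with h' | h'
      · rw [hagree j hj (Nat.lt_succ_iff.1 h')]
        exact hwmem j hj (Nat.lt_succ_iff.1 h')
      · have hjeq : j = k + 1 := le_antisymm hjk1 h'
        rw [hjeq]
        simpa [hw'] using hxmem
    · intro j hj hjk1 m
      rcases Nat.lt_or_ge j (k + 1) with h' | h'
      · have hjk : j ≤ k := Nat.lt_succ_iff.1 h'
        rw [hstGeq (j - 1) (le_trans (Nat.sub_le j 1) hjk) _]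
        exact hpos j hj hjk _
      · have hjeq : j = k + 1 := le_antisymm hjk1 h'
        subst hjeq
        have : (k + 1) - 1 = k := rfl
        rw [this, hstGeq k le_rfl]
        exact hpos1 (ψ2 m)
    · intro j hj hjk1
      rcases Nat.lt_or_ge j (k + 1) with h' | h'
      · have hjk : j ≤ k := Nat.lt_succ_iff.1 h'
        have := (htend j hj hjk).comp (haddN.comp hψ2).tendsto_atTop
        refine this.congr fun m => ?_
        rw [hstGeq (j - 1) (le_trans (Nat.sub_le j 1) hjk), hagree j hj hjk]
        rfl
      · have hjeq : j = k + 1 := le_antisymm hjk1 h'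
        subst hjeq
        have heq : (k + 1) - 1 = k := rfl
        refine hxconv.congr fun m => ?_
        rw [heq, hstGeq k le_rfl]
        have : w' (k + 1) = x := Function.update_self (k + 1) x w
        rw [this]
        rfl
  · intro j hjk
    exact Function.update_of_ne (show j ≠ k + 1 by omega) x w

end Abstract2
end SEF
namespace SEF
section Master
open Filter
variable {E : Type*} [AddCommGroup E] [Module ℝ E]
variable {Z : ℕ → Set E} {nrm : ℕ → E → ℝ}

lemma expPartialSum_real (w : ℕ → E) (Γ : ℕ → ℕ → ℝ) (m n : ℕ) :
    expPartialSum ℝ w Γ m n = ∑ j ∈ Finset.Icc 1 m, Γ j n • w j := by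
  unfold expPartialSum
  refine Finset.sum_congr rfl fun j _ => ?_
  norm_num

lemma sum_mem_Z (hNF : NF Z nrm) (K m : ℕ) (f : ℕ → E)
    (hf : ∀ j ∈ Finset.Icc 1 m, f j ∈ Z K) : (∑ j ∈ Finset.Icc 1 m, f j) ∈ Z K :=
  Finset.sum_induction f (· ∈ Z K) (fun a b ha hb => hNF.add K a ha b hb) (hNF.zero K) hf

theorem abstract_expansion (hNF : NF Z nrm)
    (hcpt : ∀ (k : ℕ) (u : ℕ → E), (∀ n, u n ∈ Z k) → (∀ n, nrm k (u n) ≤ 1) →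
      ∃ ψ : ℕ → ℕ, StrictMono ψ ∧
        ∃ x ∈ Z (k + 1), Tendsto (fun n => nrm (k + 1) (u (ψ n) - x)) atTop (nhds 0))
    {v : ℕ → E} {c : E} (hv : ∀ n, v n ∈ Z 0) (hc : c ∈ Z 0)
    (hconv : Tendsto (fun n => nrm 0 (v n - c)) atTop (nhds 0)) :
    ∃ ψ : ℕ → ℕ, StrictMono ψ ∧ HasStrictExpansion ℝ Z nrm (fun n => v (ψ n)) := by
  classical
  by_cases hT : ∃ (k : ℕ) (φ : ℕ → ℕ) (w : ℕ → E),
      Good Z nrm v c k φ w ∧ ∀ m, Rm nrm v c w k (φ m) = 0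
  · -- terminal case: finite expansion (cases I and II)
    obtain ⟨k, φ, w, hg, hz⟩ := hT
    obtain ⟨hφ, hbase, hwmem, hpos, htend⟩ := hg
    cases k with
    | zero =>
        refine ⟨φ, hφ, c, ∅, fun _ => 0, fun _ _ => 0, fun _ _ => 1, fun _ => 1, ?_⟩
        left
        refine ⟨rfl, hc, fun n => ?_⟩
        have := hz n
        rw [Rm] at this
        exact sub_eq_zero.1 this
    | succ K =>
        refine ⟨φ, hφ, c, Set.Icc 1 (K + 1), w,
          fun k n => (stG nrm v c w (k - 1) (φ n)).2,
          fun k n => (stG nrm v c w (k - 1) (φ n)).1, fun _ => 1, ?_⟩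
        right; left
        refine ⟨K + 1, rfl, Nat.succ_le_succ (Nat.zero_le K), hc, hwmem, ?_, hpos, ?_, ?_, htend,
          ?_, ?_, ?_⟩
        · -- wn membership
          intro k hk hkK n
          exact stG_mem hNF hv hc (k - 1)
            (fun j hj hjk => hwmem j hj (le_trans hjk (le_trans (Nat.sub_le k 1) hkK))) (φ n)
        · -- Γ 1 tendsto 0
          refine hbase.congr fun m => ?_
          rfl
        · -- ratios
          intro k hk hkK
          obtain ⟨K', rfl⟩ : ∃ K', k = K' + 1 := ⟨k - 1, (Nat.succ_pred_eq_of_pos hk).symm⟩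
          have hKle : K' + 1 ≤ K + 1 := le_of_lt hkK
          have h1 := htend (K' + 1) hk hKle
          refine h1.congr fun m => ?_
          have hp : 0 < (stG nrm v c w K' (φ m)).1 := by
            have := hpos (K' + 1) hk hKle m
            simpa using this
          have hstep : (stG nrm v c w (K' + 1) (φ m)).1
              = (stG nrm v c w K' (φ m)).1
                * nrm (K' + 1) ((stG nrm v c w K' (φ m)).2 - w (K' + 1)) := rfl
          simp only [Nat.add_sub_cancel]
          rw [hstep, mul_div_cancel_left₀ _ (ne_of_gt hp)]
        · -- unit norms
          intro k hk hkK n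
          exact stG_unit hNF hv hc (k - 1)
            (fun j hj hjk => hwmem j hj (le_trans hjk (le_trans (Nat.sub_le k 1) hkK)))
            (φ n) (hpos k hk hkK n)
        · -- identity
          intro k hk hkK n
          rw [expPartialSum_real]
          have halg : algebraMap ℝ ℝ ((stG nrm v c w (k - 1) (φ n)).1)
              = (stG nrm v c w (k - 1) (φ n)).1 := by norm_num
          rw [halg]
          exact stG_identity hNF hv hc (k - 1)
            (fun j hj hjk => hwmem j hj (le_trans hjk (le_trans (Nat.sub_le k 1) hkK))) (φ n)
        · -- wn K0 = w K0
          intro n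
          have := hz n
          rw [Rm] at this
          exact sub_eq_zero.1 this
  · -- non-terminal case: infinite expansion (case III)
    have hfreq : ∀ (k : ℕ) (φ : ℕ → ℕ) (w : ℕ → E), Good Z nrm v c k φ w →
        ∀ᶠ m in atTop, Rm nrm v c w k (φ m) ≠ 0 := by
      intro k φ w hg
      by_contra hctr
      rw [Filter.not_eventually] at hctr
      have hfr : ∃ᶠ m in atTop, Rm nrm v c w k (φ m) = 0 := by
        refine hctr.mono fun m hm => ?_
        by_contra h'
        exact hm h'
      obtain ⟨φ', hφ', hall⟩ := Filter.extraction_of_frequently_atTop hfr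
      exact hT ⟨k, φ ∘ φ', w, Good_comp hg hφ', fun m => hall m⟩
    have hstep : ∀ (k : ℕ) (t : {pw : (ℕ → ℕ) × (ℕ → E) // Good Z nrm v c k pw.1 pw.2}),
        ∃ t' : {pw : (ℕ → ℕ) × (ℕ → E) // Good Z nrm v c (k + 1) pw.1 pw.2},
          (∃ ψ, StrictMono ψ ∧ t'.1.1 = t.1.1 ∘ ψ) ∧ ∀ j, j ≤ k → t'.1.2 j = t.1.2 j := by
      rintro k ⟨⟨φ, w⟩, hg⟩
      obtain ⟨ψ, x, hψ, hg', hag⟩ := Good_step hNF hcpt hv hc hg (hfreq k φ w hg)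
      exact ⟨⟨⟨φ ∘ ψ, Function.update w (k + 1) x⟩, hg'⟩, ⟨ψ, hψ, rfl⟩, hag⟩
    choose next hnext1 hnext2 using hstep
    have hg0 : Good Z nrm v c 0 id (fun _ => (0 : E)) := by
      refine ⟨strictMono_id, by simpa using hconv, ?_, ?_, ?_⟩ <;>
        exact fun j hj hj0 => absurd (le_trans hj hj0) (by norm_num)
    set S : ∀ k, {pw : (ℕ → ℕ) × (ℕ → E) // Good Z nrm v c k pw.1 pw.2} :=
      fun k => Nat.rec ⟨⟨id, fun _ => 0⟩, hg0⟩ next k with hS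
    have hgood : ∀ k, Good Z nrm v c k (S k).1.1 (S k).1.2 := fun k => (S k).2
    set winf : ℕ → E := fun j => (S j).1.2 j with hwinf
    have hstab : ∀ j K, j ≤ K → (S K).1.2 j = winf j := by
      intro j K
      induction K with
      | zero =>
          intro h
          have hj0 : j = 0 := Nat.le_zero.1 h
          subst hj0; rfl
      | succ K ih =>
          intro hjK1
          rcases Nat.lt_or_ge j (K + 1) with h' | h'
          · have hjK : j ≤ K := Nat.lt_succ_iff.1 h'
            have h1 : (S (K + 1)).1.2 j = (S K).1.2 j := hnext2 K (S K) j hjK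
            rw [h1, ih hjK]
          · have hje : j = K + 1 := le_antisymm hjK1 h'
            subst hje; rfl
    have hsub2 : ∀ k K, k ≤ K → ∃ θ : ℕ → ℕ, StrictMono θ ∧ (S K).1.1 = (S k).1.1 ∘ θ := by
      intro k K
      induction K with
      | zero =>
          intro h
          have hk0 : k = 0 := Nat.le_zero.1 h
          subst hk0
          exact ⟨id, strictMono_id, rfl⟩
      | succ K ih =>
          intro hkK1
          rcases Nat.lt_or_ge k (K + 1) with h' | h'
          · obtain ⟨θ, hθ, hc1⟩ := ih (Nat.lt_succ_iff.1 h')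
            obtain ⟨ψ, hψ, hc2⟩ : ∃ ψ, StrictMono ψ ∧ (S (K + 1)).1.1 = (S K).1.1 ∘ ψ :=
              hnext1 K (S K)
            refine ⟨θ ∘ ψ, hθ.comp hψ, ?_⟩
            rw [hc2, hc1]
            rfl
          · have hke : k = K + 1 := le_antisymm hkK1 h'
            subst hke
            exact ⟨id, strictMono_id, rfl⟩
    set d : ℕ → ℕ := fun n => (S n).1.1 n with hd
    have hdmono : StrictMono d := by
      apply strictMono_nat_of_lt_succ
      intro n
      obtain ⟨ψ, hψ, hcomp⟩ : ∃ ψ, StrictMono ψ ∧ (S (n + 1)).1.1 = (S n).1.1 ∘ ψ :=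
        hnext1 n (S n)
      have h1 : d (n + 1) = (S n).1.1 (ψ (n + 1)) := by
        show (S (n + 1)).1.1 (n + 1) = _
        rw [hcomp]; rfl
      rw [h1]
      calc (S n).1.1 n < (S n).1.1 (n + 1) := (hgood n).1 (Nat.lt_succ_self n)
        _ ≤ (S n).1.1 (ψ (n + 1)) := ((hgood n).1.monotone (hψ.le_apply))
    have hdix : ∀ k, ∃ g : ℕ → ℕ, Tendsto g atTop atTop ∧ ∀ n, k ≤ n → d n = (S k).1.1 (g n) := by
      intro k
      have hchoice : ∀ n, ∃ gn : ℕ, k ≤ n → (n ≤ gn ∧ d n = (S k).1.1 gn) := by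
        intro n
        by_cases h : k ≤ n
        · obtain ⟨θ, hθ, hcomp⟩ := hsub2 k n h
          refine ⟨θ n, fun _ => ⟨hθ.le_apply, ?_⟩⟩
          show (S n).1.1 n = _
          rw [hcomp]; rfl
        · exact ⟨n, fun h' => absurd h' h⟩
      choose g hg using hchoice
      refine ⟨g, ?_, fun n hn => (hg n hn).2⟩
      refine tendsto_atTop_mono' atTop ?_ tendsto_id
      filter_upwards [eventually_ge_atTop k] with n hn
      exact (hg n hn).1
    choose g hgT hgeq using hdix
    have hwinfmem : ∀ j, 1 ≤ j → winf j ∈ Z j := fun j hj => (hgood j).2.2.1 j hj le_rfl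
    have hstGw : ∀ k, 1 ≤ k → ∀ n, stG nrm v c winf (k - 1) n = stG nrm v c (S k).1.2 (k - 1) n := by
      intro k hk n
      exact stG_congr nrm v c (k - 1)
        (fun j hj hjk => (hstab j k (le_trans hjk (Nat.sub_le k 1))).symm) n
    have hkey : ∀ k, 1 ≤ k → ∀ n, k ≤ n → 0 < (stG nrm v c winf (k - 1) (d n)).1 := by
      intro k hk n hn
      rw [hgeq k n hn, hstGw k hk]
      exact (hgood k).2.2.2.1 k hk le_rfl (g k n)
    have htendk : ∀ k, 1 ≤ k →
        Tendsto (fun n => nrm k ((stG nrm v c winf (k - 1) (d n)).2 - winf k)) atTop (nhds 0) := by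
      intro k hk
      have h1 := ((hgood k).2.2.2.2 k hk le_rfl).comp (hgT k)
      refine h1.congr' ?_
      filter_upwards [eventually_ge_atTop k] with n hn
      show nrm k ((stG nrm v c (S k).1.2 (k - 1) ((S k).1.1 (g k n))).2 - (S k).1.2 k) = _
      rw [hgeq k n hn, hstGw k hk, hstab k k le_rfl]
    set Γ' : ℕ → ℕ → ℝ := fun k n =>
      if 0 < (stG nrm v c winf (k - 1) (d n)).1 then (stG nrm v c winf (k - 1) (d n)).1 else 1
      with hΓ'
    set wn' : ℕ → ℕ → E := fun k n =>
      (Γ' k n)⁻¹ • (v (d n) - c - ∑ j ∈ Finset.Icc 1 (k - 1), Γ' j n • winf j) with hwn'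
    have hΓpos : ∀ k n, 0 < Γ' k n := by
      intro k n
      show (0:ℝ) < if _ then _ else _
      split_ifs with h
      · exact h
      · exact one_pos
    have hΓeq : ∀ k, 1 ≤ k → ∀ n, k ≤ n → Γ' k n = (stG nrm v c winf (k - 1) (d n)).1 :=
      fun k hk n hn => if_pos (hkey k hk n hn)
    have hwn'eq : ∀ k, 1 ≤ k → ∀ n, k ≤ n → wn' k n = (stG nrm v c winf (k - 1) (d n)).2 := by
      intro k hk n hn
      have hid := stG_identity hNF hv hc (k - 1) (fun j hj _ => hwinfmem j hj) (d n)
      have hsumeq : ∑ j ∈ Finset.Icc 1 (k - 1), Γ' j n • winf j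
          = ∑ j ∈ Finset.Icc 1 (k - 1), (stG nrm v c winf (j - 1) (d n)).1 • winf j := by
        refine Finset.sum_congr rfl fun j hjmem => ?_
        obtain ⟨hj1, hjk⟩ := Finset.mem_Icc.1 hjmem
        rw [hΓeq j hj1 n (le_trans (le_trans hjk (Nat.sub_le k 1)) hn)]
      have hres : v (d n) - c - ∑ j ∈ Finset.Icc 1 (k - 1), Γ' j n • winf j
          = (stG nrm v c winf (k - 1) (d n)).1 • (stG nrm v c winf (k - 1) (d n)).2 := by
        rw [hsumeq]
        rw [hid]
        abel
      show (Γ' k n)⁻¹ • _ = _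
      rw [hres, hΓeq k hk n hn, inv_smul_smul₀ (ne_of_gt (hkey k hk n hn))]
    refine ⟨d, hdmono, c, {k : ℕ | 1 ≤ k}, winf, wn', Γ', fun k => max 1 k, ?_⟩
    right; right
    refine ⟨rfl, hc, hwinfmem, ?_, ?_, fun k _ => le_max_left 1 k, ?_, ?_, ?_, ?_, ?_⟩
    · -- wn' membership
      intro k hk n
      have h1 : v (d n) - c ∈ Z (k - 1) :=
        hNF.incl_le (Nat.zero_le (k - 1)) (hNF.sub 0 (hv (d n)) hc)
      have h2 : (∑ j ∈ Finset.Icc 1 (k - 1), Γ' j n • winf j) ∈ Z (k - 1) := by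
        refine sum_mem_Z hNF (k - 1) (k - 1) _ fun j hjmem => ?_
        obtain ⟨hj1, hjk⟩ := Finset.mem_Icc.1 hjmem
        exact hNF.smul (k - 1) _ _ (hNF.incl_le hjk (hwinfmem j hj1))
      exact hNF.smul (k - 1) _ _ (hNF.sub (k - 1) h1 h2)
    · -- Γ' positivity
      exact fun k _ n => hΓpos k n
    · -- Γ' 1 tendsto 0
      have hb1 : Tendsto (fun n => nrm 0 (v (d n) - c)) atTop (nhds 0) :=
        hconv.comp hdmono.tendsto_atTop
      refine hb1.congr' ?_
      filter_upwards [eventually_ge_atTop 1] with n hn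
      rw [hΓeq 1 le_rfl n hn]
      rfl
    · -- ratios
      intro k hk
      have h1 := htendk k hk
      refine h1.congr' ?_
      filter_upwards [eventually_ge_atTop (k + 1)] with n hn
      obtain ⟨K', rfl⟩ : ∃ K', k = K' + 1 := ⟨k - 1, (Nat.succ_pred_eq_of_pos hk).symm⟩
      have hkn : K' + 1 ≤ n := le_trans (Nat.le_succ (K' + 1)) hn
      have hp : 0 < (stG nrm v c winf K' (d n)).1 := by
        have := hkey (K' + 1) hk n hkn
        simpa using this
      have hr1 : Γ' (K' + 1 + 1) n = (stG nrm v c winf (K' + 1) (d n)).1 := by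
        have := hΓeq (K' + 1 + 1) (by omega) n hn
        simpa using this
      have hr2 : Γ' (K' + 1) n = (stG nrm v c winf K' (d n)).1 := by
        have := hΓeq (K' + 1) hk n hkn
        simpa using this
      have hstep2 : (stG nrm v c winf (K' + 1) (d n)).1
          = (stG nrm v c winf K' (d n)).1
            * nrm (K' + 1) ((stG nrm v c winf K' (d n)).2 - winf (K' + 1)) := rfl
      show nrm (K' + 1) ((stG nrm v c winf ((K' + 1) - 1) (d n)).2 - winf (K' + 1)) = _
      rw [show (K' + 1) - 1 = K' from rfl, hr1, hr2, hstep2,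
        mul_div_cancel_left₀ _ (ne_of_gt hp)]
    · -- wn' tendsto
      intro k hk
      refine (htendk k hk).congr' ?_
      filter_upwards [eventually_ge_atTop k] with n hn
      rw [hwn'eq k hk n hn]
    · -- identity
      intro k hk n
      rw [expPartialSum_real]
      have halg : algebraMap ℝ ℝ (Γ' k n) = Γ' k n := by norm_num
      rw [halg]
      have hsm : Γ' k n • wn' k n
          = v (d n) - c - ∑ j ∈ Finset.Icc 1 (k - 1), Γ' j n • winf j := by
        show Γ' k n • ((Γ' k n)⁻¹ • _) = _
        rw [smul_inv_smul₀ (ne_of_gt (hΓpos k n))]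
      rw [hsm]
      abel
    · -- unit norms
      intro k hk n hn
      have hkn : k ≤ n := le_trans (le_max_right 1 k) hn
      rw [hwn'eq k hk n hkn]
      exact stG_unit hNF hv hc (k - 1) (fun j hj _ => hwinfmem j hj) (d n) (hkey k hk n hkn)

end Master
end SEF

/-- a sequence bounded in `D(A^σ)` has a subsequence with a strict
expansion in any nested family `(D(A^{s_k}))_k` with `σ > s_0 > s_1 > ⋯ > 0`. -/
theorem strict_expansion_in_fractional_family
    {H : Type*} [NormedAddCommGroup H] [InnerProductSpace ℝ H] [CompleteSpace H]
    (lam : ℕ → ℝ) (e : ℕ → H) (hbasis : IsEigenBasis lam e)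
    (σ : ℝ) (hσ : 0 < σ) (v : ℕ → H)
    (hvmem : ∀ n, memDA lam e σ (v n)) (hbdd : ∃ M, ∀ n, sobNorm lam e σ (v n) ≤ M)
    (s : ℕ → ℝ) (hanti : StrictAnti s) (hs : ∀ k, 0 < s k ∧ s k < σ) :
    ∃ ψ : ℕ → ℕ, StrictMono ψ ∧
      HasStrictExpansion ℝ (fun k => {u : H | memDA lam e (s k) u})
        (fun k => sobNorm lam e (s k)) (fun n => v (ψ n)) := by
  classical
  obtain ⟨M, hM⟩ := hbdd
  set Z : ℕ → Set H := fun k => {u : H | memDA lam e (s k) u} with hZ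
  set nrm : ℕ → H → ℝ := fun k => sobNorm lam e (s k) with hnrm
  have hNF : SEF.NF Z nrm := by
    refine ⟨fun k => SEF.memDA_zero lam e (s k),
      fun k x hx y hy => SEF.memDA_add hbasis hx hy,
      fun k a x hx => SEF.memDA_smul hbasis a hx,
      fun k x _ => SEF.sobNorm_nonneg lam e (s k) x,
      fun k x hx => SEF.sobNorm_eq_zero_iff hbasis hx,
      fun k a x _ => ?_,
      fun k x hx => SEF.memDA_mono hbasis (le_of_lt (hanti (Nat.lt_succ_self k))) hx⟩
    show sobNorm lam e (s k) (a • x) = ‖a‖ * sobNorm lam e (s k) x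
    rw [SEF.sobNorm_smul hbasis, Real.norm_eq_abs]
  have hcpt : ∀ (k : ℕ) (u : ℕ → H), (∀ n, u n ∈ Z k) → (∀ n, nrm k (u n) ≤ 1) →
      ∃ ψ : ℕ → ℕ, StrictMono ψ ∧
        ∃ x ∈ Z (k + 1), Filter.Tendsto (fun n => nrm (k + 1) (u (ψ n) - x))
          Filter.atTop (nhds 0) := by
    intro k u hu hb1
    obtain ⟨ψ, hψ, x, hxt, hxr, hconv'⟩ :=
      SEF.compact_embed hbasis (hs (k + 1)).1.le (hanti (Nat.lt_succ_self k)) u hu hb1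
    exact ⟨ψ, hψ, x, hxt, hconv'⟩
  obtain ⟨ψ0, hψ0, c, hct, hcr, hconv⟩ :=
    SEF.compact_embed hbasis (hs 0).1.le (hs 0).2 v hvmem hM
  have hv' : ∀ n, v (ψ0 n) ∈ Z 0 := fun n =>
    SEF.memDA_mono hbasis (hs 0).2.le (hvmem (ψ0 n))
  have hconv' : Filter.Tendsto (fun n => nrm 0 (v (ψ0 n) - c)) Filter.atTop (nhds 0) := hconv
  obtain ⟨ψ1, hψ1, hexp⟩ := SEF.abstract_expansion hNF hcpt hv' hct hconv'
  exact ⟨ψ0 ∘ ψ1, hψ0.comp hψ1, hexp⟩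
end
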